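/- arXiv:2212.05426 — 4 statements merged into one kernel-verified Lean document; each statement's English description precedes it below -/
import Mathlib

section
/- For every integer p ≥ 2, the number μ_{2,p}(full) of isomorphism classes of double-coverings {A_1,…,A_p} with #(A_k) = 2 for all k equals ν(p) − ν(p−1). -/
/-- The union of all member sets of a set-collection. -/
def unionC (C : Multiset (Finset ℕ)) : Finset ℕ := C.sup

/-- A set-collection is a double-covering if every point of its union lies in
exactly two member sets (counted with multiplicity). -/
def IsDoubleCover (C : Multiset (Finset ℕ)) : Prop :=
  ∀ a ∈ unionC C, Multiset.countP (fun A => a ∈ A) C = 2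

/-- A set-collection is an even-covering if every point of its union lies in an
even number of member sets (counted with multiplicity). -/
def IsEvenCover (C : Multiset (Finset ℕ)) : Prop :=
  ∀ a ∈ unionC C, Even (Multiset.countP (fun A => a ∈ A) C)

/-- Two set-collections are isomorphic: there is a bijection between their
unions mapping the first multiset of sets onto the second. -/
def Isomorphic (C D : Multiset (Finset ℕ)) : Prop :=
  ∃ φ : ℕ → ℕ, Set.BijOn φ ↑(unionC C) ↑(unionC D) ∧
    C.map (Finset.image φ) = D

/-- A set-collection is connected if any two member sets are joined by a chain
of member sets with consecutive nonempty intersections. -/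
def ConnectedColl (C : Multiset (Finset ℕ)) : Prop :=
  ∀ A ∈ C, ∀ B ∈ C,
    Relation.ReflTransGen (fun X Y => X ∈ C ∧ Y ∈ C ∧ (X ∩ Y).Nonempty) A B

/-- `D` is a connected component of `C`: a nonempty connected sub-multiset
separated from the rest of `C`. -/
def IsComponent (C D : Multiset (Finset ℕ)) : Prop :=
  D ≤ C ∧ D ≠ 0 ∧ ConnectedColl D ∧ ∀ B ∈ C - D, ∀ A ∈ D, B ∩ A = ∅

/-- A set-collection is standard if no two of its distinct connected components
are isomorphic. -/
def IsStandard (C : Multiset (Finset ℕ)) : Prop :=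
  ∀ D E : Multiset (Finset ℕ),
    IsComponent C D → IsComponent C E → D ≠ E → ¬ Isomorphic D E

/-- `μ_{l,p}(full)`: the number of isomorphism classes of double-coverings of
`p` sets each of cardinality `l`. -/
noncomputable def muFull (l p : ℕ) : ℕ :=
  Nat.card (Quot (fun C D : {C : Multiset (Finset ℕ) //
      Multiset.card C = p ∧ IsDoubleCover C ∧ ∀ A ∈ C, A.card = l} =>
    Isomorphic C.1 D.1))

/-- `μ_{l,p}(standard)`: the number of isomorphism classes of standard
double-coverings of `p` sets each of cardinality `l`. -/
noncomputable def muStandard (l p : ℕ) : ℕ :=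
  Nat.card (Quot (fun C D : {C : Multiset (Finset ℕ) //
      Multiset.card C = p ∧ IsDoubleCover C ∧ IsStandard C ∧ ∀ A ∈ C, A.card = l} =>
    Isomorphic C.1 D.1))

/-- `μ*_{l,p}(full)`: the number of isomorphism classes of double-coverings of
`p` sets each of cardinality between `1` and `l`. -/
noncomputable def muStarFull (l p : ℕ) : ℕ :=
  Nat.card (Quot (fun C D : {C : Multiset (Finset ℕ) //
      Multiset.card C = p ∧ IsDoubleCover C ∧ ∀ A ∈ C, 1 ≤ A.card ∧ A.card ≤ l} =>
    Isomorphic C.1 D.1))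

/-- The family `D_{l,p}` of double-coverings of `p` sets of cardinality `l`
contained in `{1,…,pl/2}`. -/
def Dfull (l p : ℕ) : Set (Multiset (Finset ℕ)) :=
  {C | Multiset.card C = p ∧ IsDoubleCover C ∧
    (∀ A ∈ C, A ⊆ Finset.Icc 1 (p * l / 2)) ∧ ∀ A ∈ C, A.card = l}

/-- The family `D*_{l,p}` of double-coverings of `p` sets of cardinality
between `1` and `l` contained in `{1,…,pl/2}`. -/
def Dstar (l p : ℕ) : Set (Multiset (Finset ℕ)) :=
  {C | Multiset.card C = p ∧ IsDoubleCover C ∧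
    (∀ A ∈ C, A ⊆ Finset.Icc 1 (p * l / 2)) ∧ ∀ A ∈ C, 1 ≤ A.card ∧ A.card ≤ l}

/-- The Rademacher function `r_n(x) = sign (sin (2^n π x))`. -/
noncomputable def rademacher (n : ℕ) (x : ℝ) : ℝ :=
  Real.sign (Real.sin (2 ^ n * Real.pi * x))

/-- The Walsh function `w_A = ∏_{k ∈ A} r_k`. -/
noncomputable def walsh (A : Finset ℕ) (x : ℝ) : ℝ :=
  ∏ k ∈ A, rademacher k x

lemma mem_unionC {a : ℕ} {C : Multiset (Finset ℕ)} :
    a ∈ unionC C ↔ ∃ A ∈ C, a ∈ A := by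
  unfold unionC
  induction C using Multiset.induction with
  | empty => simp
  | cons A S ih =>
      simp [Multiset.sup_cons, ih, Finset.mem_union, or_and_right, exists_or]

lemma subset_unionC {A : Finset ℕ} {C : Multiset (Finset ℕ)} (h : A ∈ C) :
    A ⊆ unionC C := fun a ha => mem_unionC.2 ⟨A, h, ha⟩

lemma unionC_add (C D : Multiset (Finset ℕ)) :
    unionC (C + D) = unionC C ∪ unionC D := by
  simp [unionC, Multiset.sup_add, Finset.sup_eq_union]

lemma Isomorphic.refl (C : Multiset (Finset ℕ)) : Isomorphic C C :=
  ⟨id, Set.bijOn_id _, by simp⟩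

lemma Isomorphic.symm {C D : Multiset (Finset ℕ)} (h : Isomorphic C D) :
    Isomorphic D C := by
  obtain ⟨φ, hbij, hmap⟩ := h
  refine ⟨Function.invFunOn φ ↑(unionC C), hbij.symm hbij.invOn_invFunOn.symm, ?_⟩
  have hinv : ∀ a ∈ unionC C, Function.invFunOn φ ↑(unionC C) (φ a) = a := fun a ha =>
    hbij.injOn.leftInvOn_invFunOn ha
  subst hmap
  rw [Multiset.map_map]
  refine Multiset.map_congr rfl ?_ |>.trans (Multiset.map_id _)
  intro A hA
  simp only [Function.comp_apply, Finset.image_image, id]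
  refine Finset.image_congr (fun a ha => hinv a (subset_unionC hA ha)) |>.trans ?_
  exact Finset.image_id

lemma Isomorphic.trans {C D E : Multiset (Finset ℕ)} (h1 : Isomorphic C D)
    (h2 : Isomorphic D E) : Isomorphic C E := by
  obtain ⟨φ, hb1, hm1⟩ := h1
  obtain ⟨ψ, hb2, hm2⟩ := h2
  refine ⟨ψ ∘ φ, hb2.comp hb1, ?_⟩
  rw [← hm2, ← hm1, Multiset.map_map]
  exact Multiset.map_congr rfl (fun A _ => (Finset.image_image).symm)

/-- Glue two isomorphisms on disjoint collections. -/
lemma Isomorphic.glue {C1 C2 D1 D2 : Multiset (Finset ℕ)}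
    (h1 : Isomorphic C1 D1) (h2 : Isomorphic C2 D2)
    (hC : unionC C1 ∩ unionC C2 = ∅) (hD : unionC D1 ∩ unionC D2 = ∅) :
    Isomorphic (C1 + C2) (D1 + D2) := by
  obtain ⟨φ1, hb1, hm1⟩ := h1
  obtain ⟨φ2, hb2, hm2⟩ := h2
  classical
  refine ⟨fun x => if x ∈ unionC C1 then φ1 x else φ2 x, ?_, ?_⟩
  · rw [unionC_add, unionC_add]
    push_cast [Finset.coe_union]
    have e1 : Set.EqOn (fun x => if x ∈ unionC C1 then φ1 x else φ2 x) φ1 ↑(unionC C1) := by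
      intro x hx; simp only [Finset.mem_coe] at hx; simp [hx]
    have e2 : Set.EqOn (fun x => if x ∈ unionC C1 then φ1 x else φ2 x) φ2 ↑(unionC C2) := by
      intro x hx; simp only [Finset.mem_coe] at hx
      have : x ∉ unionC C1 := by
        intro hx1
        have : x ∈ unionC C1 ∩ unionC C2 := Finset.mem_inter.2 ⟨hx1, hx⟩
        simp [hC] at this
      simp [this]
    refine Set.BijOn.union (hb1.congr e1.symm) (hb2.congr e2.symm) ?_
    intro x hx y hy hxy
    rcases hx with hx | hx <;> rcases hy with hy | hy
    · exact hb1.injOn hx hy (by rwa [e1 hx, e1 hy] at hxy)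
    · exfalso
      have h1' : φ1 x ∈ unionC D1 := hb1.mapsTo hx
      have h2' : φ2 y ∈ unionC D2 := hb2.mapsTo hy
      rw [show _ = φ1 x from e1 hx, show _ = φ2 y from e2 hy] at hxy
      rw [hxy] at h1'
      have : φ2 y ∈ unionC D1 ∩ unionC D2 := Finset.mem_inter.2 ⟨h1', h2'⟩
      simp [hD] at this
    · exfalso
      have h1' : φ1 y ∈ unionC D1 := hb1.mapsTo hy
      have h2' : φ2 x ∈ unionC D2 := hb2.mapsTo hx
      rw [show _ = φ1 y from e1 hy, show _ = φ2 x from e2 hx] at hxy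
      rw [← hxy] at h1'
      have : φ2 x ∈ unionC D1 ∩ unionC D2 := Finset.mem_inter.2 ⟨h1', h2'⟩
      simp [hD] at this
    · exact hb2.injOn hx hy (by rwa [e2 hx, e2 hy] at hxy)
  · rw [Multiset.map_add]
    congr 1
    · rw [← hm1]
      refine Multiset.map_congr rfl (fun A hA => ?_)
      refine Finset.image_congr (fun a ha => ?_)
      have : a ∈ unionC C1 := subset_unionC hA ha
      simp [this]
    · rw [← hm2]
      refine Multiset.map_congr rfl (fun A hA => ?_)
      refine Finset.image_congr (fun a ha => ?_)
      have h2' : a ∈ unionC C2 := subset_unionC hA ha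
      have : a ∉ unionC C1 := by
        intro hx1
        have : a ∈ unionC C1 ∩ unionC C2 := Finset.mem_inter.2 ⟨hx1, h2'⟩
        simp [hC] at this
      simp [this]

/-- successor index on a cycle of length `n` -/
def cnext (n i : ℕ) : ℕ := if i + 1 = n then 0 else i + 1

/-- the standard cycle of length `n` on `{o, …, o+n-1}` -/
def cyc (o n : ℕ) : Multiset (Finset ℕ) :=
  (Multiset.range n).map (fun i => {i + o, cnext n i + o})

/-- disjoint union of standard cycles with sizes given by `l` -/
def gList (o : ℕ) : List ℕ → Multiset (Finset ℕ)
  | [] => 0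
  | n :: l => cyc o n + gList (o + n) l

lemma cnext_lt {n i : ℕ} (h : i < n) : cnext n i < n := by
  unfold cnext; split <;> omega

lemma cnext_ne {n i : ℕ} (h2 : 2 ≤ n) (h : i < n) : cnext n i ≠ i := by
  unfold cnext; split <;> omega

lemma card_cyc (o n : ℕ) : Multiset.card (cyc o n) = n := by simp [cyc]

lemma mem_cyc {A : Finset ℕ} {o n : ℕ} :
    A ∈ cyc o n ↔ ∃ i, i < n ∧ A = {i + o, cnext n i + o} := by
  simp [cyc, eq_comm]

lemma unionC_cyc {n : ℕ} (h : 1 ≤ n) (o : ℕ) :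
    unionC (cyc o n) = Finset.Ico o (o + n) := by
  ext a
  rw [mem_unionC, Finset.mem_Ico]
  constructor
  · rintro ⟨A, hA, haA⟩
    obtain ⟨i, hi, rfl⟩ := mem_cyc.1 hA
    have := cnext_lt hi
    simp only [Finset.mem_insert, Finset.mem_singleton] at haA
    omega
  · intro ha
    refine ⟨{(a - o) + o, cnext n (a - o) + o}, mem_cyc.2 ⟨a - o, by omega, rfl⟩, ?_⟩
    simp only [Finset.mem_insert, Finset.mem_singleton]
    omega

lemma card_two_cyc {n : ℕ} (h2 : 2 ≤ n) {o : ℕ} {A : Finset ℕ} (hA : A ∈ cyc o n) :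
    A.card = 2 := by
  obtain ⟨i, hi, rfl⟩ := mem_cyc.1 hA
  have := cnext_ne h2 hi
  rw [Finset.card_insert_of_notMem (by simp; omega), Finset.card_singleton]

lemma countP_cyc {n i : ℕ} (h2 : 2 ≤ n) (hi : i < n) (o : ℕ) :
    Multiset.countP (fun A => i + o ∈ A) (cyc o n) = 2 := by
  classical
  unfold cyc
  rw [Multiset.countP_map]
  have hrange : Multiset.range n = (Finset.range n).val := rfl
  rw [hrange]
  have hfilter : (Finset.range n).val.filter
      (fun j => i + o ∈ ({j + o, cnext n j + o} : Finset ℕ)) =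
      (Finset.filter (fun j => i + o ∈ ({j + o, cnext n j + o} : Finset ℕ))
        (Finset.range n)).val := rfl
  rw [hfilter]
  set i' := if i = 0 then n - 1 else i - 1 with hi'
  have hii' : i ≠ i' ∧ i' < n := by rw [hi']; split <;> omega
  have hcn : ∀ j, j < n → (cnext n j = i ↔ j = i') := by
    intro j hj
    rw [hi']
    unfold cnext
    split <;> split <;> omega
  have : (Finset.filter (fun j => i + o ∈ ({j + o, cnext n j + o} : Finset ℕ))
        (Finset.range n)) = {i, i'} := by
    ext j
    simp only [Finset.mem_filter, Finset.mem_range, Finset.mem_insert,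
      Finset.mem_singleton]
    constructor
    · rintro ⟨hj, hmem⟩
      rcases hmem with h | h
      · left; omega
      · right; rw [← hcn j hj]; omega
    · rintro (rfl | rfl)
      · exact ⟨hi, Or.inl rfl⟩
      · refine ⟨hii'.2, Or.inr ?_⟩
        have := (hcn i' hii'.2).2 rfl
        omega
  rw [this]
  rw [← Finset.card]
  rw [Finset.card_insert_of_notMem (by simpa using hii'.1), Finset.card_singleton]

lemma isDoubleCover_cyc {n : ℕ} (h2 : 2 ≤ n) (o : ℕ) : IsDoubleCover (cyc o n) := by
  intro a ha
  rw [unionC_cyc (by omega) o, Finset.mem_Ico] at ha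
  have h : a = (a - o) + o := by omega
  rw [h]
  exact countP_cyc h2 (by omega) o

lemma countP_eq_zero_of_not_mem_unionC {a : ℕ} {C : Multiset (Finset ℕ)}
    (h : a ∉ unionC C) : Multiset.countP (fun A => a ∈ A) C = 0 := by
  classical
  rw [Multiset.countP_eq_zero]
  intro A hA ha
  exact h (mem_unionC.2 ⟨A, hA, ha⟩)

lemma IsDoubleCover.add {C D : Multiset (Finset ℕ)} (h1 : IsDoubleCover C)
    (h2 : IsDoubleCover D) (hdisj : unionC C ∩ unionC D = ∅) :
    IsDoubleCover (C + D) := by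
  intro a ha
  rw [unionC_add, Finset.mem_union] at ha
  classical
  rw [Multiset.countP_add]
  rcases ha with ha | ha
  · have : a ∉ unionC D := by
      intro h
      have : a ∈ unionC C ∩ unionC D := Finset.mem_inter.2 ⟨ha, h⟩
      simp [hdisj] at this
    rw [h1 a ha, countP_eq_zero_of_not_mem_unionC this]
  · have : a ∉ unionC C := by
      intro h
      have : a ∈ unionC C ∩ unionC D := Finset.mem_inter.2 ⟨h, ha⟩
      simp [hdisj] at this
    rw [h2 a ha, countP_eq_zero_of_not_mem_unionC this]

lemma unionC_zero : unionC 0 = ∅ := rfl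

lemma unionC_gList {l : List ℕ} (hl : ∀ n ∈ l, 1 ≤ n) :
    ∀ o, unionC (gList o l) = Finset.Ico o (o + l.sum) := by
  induction l with
  | nil => intro o; simp [gList, unionC_zero]
  | cons n l ih =>
      intro o
      have hn : 1 ≤ n := hl n (by simp)
      rw [show gList o (n :: l) = cyc o n + gList (o + n) l from rfl, unionC_add,
        unionC_cyc hn o, ih (fun m hm => hl m (by simp [hm])) (o + n)]
      rw [Finset.Ico_union_Ico_eq_Ico (by omega) (by omega)]
      congr 1
      simp [List.sum_cons]
      omega

lemma card_gList (l : List ℕ) : ∀ o, Multiset.card (gList o l) = l.sum := by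
  induction l with
  | nil => intro o; simp [gList]
  | cons n l ih => intro o; simp [gList, card_cyc, ih]

lemma isDoubleCover_gList {l : List ℕ} (hl : ∀ n ∈ l, 2 ≤ n) :
    ∀ o, IsDoubleCover (gList o l) := by
  induction l with
  | nil => intro o A hA; simp [gList, unionC_zero] at hA
  | cons n l ih =>
      intro o
      have hn : 2 ≤ n := hl n (by simp)
      refine (isDoubleCover_cyc hn o).add (ih (fun m hm => hl m (by simp [hm])) (o + n)) ?_
      rw [unionC_cyc (by omega) o, unionC_gList (fun m hm => by have := hl m (by simp [hm]); omega) (o + n)]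
      rw [Finset.Ico_inter_Ico]
      apply Finset.Ico_eq_empty
      omega

lemma card_two_gList {l : List ℕ} (hl : ∀ n ∈ l, 2 ≤ n) :
    ∀ o, ∀ A ∈ gList o l, A.card = 2 := by
  induction l with
  | nil => intro o A hA; simp [gList] at hA
  | cons n l ih =>
      intro o A hA
      rw [show gList o (n :: l) = cyc o n + gList (o + n) l from rfl, Multiset.mem_add] at hA
      rcases hA with hA | hA
      · exact card_two_cyc (hl n (by simp)) hA
      · exact ih (fun m hm => hl m (by simp [hm])) (o + n) A hA

lemma cyc_eq_map (o n : ℕ) : cyc o n = (cyc 0 n).map (Finset.image (· + o)) := by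
  unfold cyc
  rw [Multiset.map_map]
  refine Multiset.map_congr rfl (fun i _ => ?_)
  simp [Finset.image_insert, Finset.image_singleton]

lemma gList_eq_map (l : List ℕ) : ∀ o, gList o l = (gList 0 l).map (Finset.image (· + o)) := by
  induction l with
  | nil => intro o; simp [gList]
  | cons n l ih =>
      intro o
      rw [show gList o (n :: l) = cyc o n + gList (o + n) l from rfl,
          show gList 0 (n :: l) = cyc 0 n + gList (0 + n) l from rfl,
          Multiset.map_add, ← cyc_eq_map]
      congr 1
      rw [ih (o + n), zero_add, ih n, Multiset.map_map]
      refine Multiset.map_congr rfl (fun A _ => ?_)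
      rw [Function.comp_apply, Finset.image_image]
      refine Finset.image_congr (fun a _ => ?_)
      simp only [Function.comp_apply]
      omega

lemma iso_gList_shift {l : List ℕ} (hl : ∀ n ∈ l, 1 ≤ n) (o o' : ℕ) :
    Isomorphic (gList o l) (gList o' l) := by
  refine ⟨fun x => x - o + o', ?_, ?_⟩
  · rw [unionC_gList hl o, unionC_gList hl o']
    constructor
    · intro x hx
      simp only [Finset.coe_Ico, Set.mem_Ico] at *
      omega
    constructor
    · intro x hx y hy hxy
      simp only [Finset.coe_Ico, Set.mem_Ico] at *
      omega
    · intro y hy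
      simp only [Finset.coe_Ico, Set.mem_Ico] at hy
      exact ⟨y - o' + o, by simp only [Finset.coe_Ico, Set.mem_Ico]; omega, by show y - o' + o - o + o' = y; omega⟩
  · rw [gList_eq_map l o, gList_eq_map l o', Multiset.map_map]
    refine Multiset.map_congr rfl (fun A hA => ?_)
    rw [Function.comp_apply, Finset.image_image]
    refine Finset.image_congr (fun a _ => ?_)
    simp only [Function.comp_apply]
    omega

lemma gList_cons (o n : ℕ) (l : List ℕ) : gList o (n :: l) = cyc o n + gList (o + n) l := rfl

lemma gList_single (o n : ℕ) : gList o [n] = cyc o n := by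
  rw [gList_cons]; simp [gList]

lemma iso_cyc_shift {n : ℕ} (hn : 1 ≤ n) (o o' : ℕ) : Isomorphic (cyc o n) (cyc o' n) := by
  have := iso_gList_shift (l := [n]) (by simpa using hn) o o'
  rwa [gList_single, gList_single] at this

lemma iso_gList_perm {l l' : List ℕ} (h : l.Perm l') (hl : ∀ n ∈ l, 1 ≤ n) (o : ℕ) :
    Isomorphic (gList o l) (gList o l') := by
  induction h generalizing o with
  | nil => exact Isomorphic.refl _
  | cons x h ih =>
      rename_i l1 l2
      rw [gList_cons, gList_cons]
      have hx : 1 ≤ x := hl x (by simp)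
      have hl1 : ∀ n ∈ l1, 1 ≤ n := fun n hn => hl n (by simp [hn])
      have hl2 : ∀ n ∈ l2, 1 ≤ n := fun n hn => hl1 n (h.mem_iff.2 hn)
      have hsum : l1.sum = l2.sum := h.sum_eq
      refine (Isomorphic.refl (cyc o x)).glue (ih hl1 (o + x)) ?_ ?_
      · rw [unionC_cyc hx o, unionC_gList hl1 (o + x), Finset.Ico_inter_Ico]
        apply Finset.Ico_eq_empty; omega
      · rw [unionC_cyc hx o, unionC_gList hl2 (o + x), Finset.Ico_inter_Ico]
        apply Finset.Ico_eq_empty; omega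
  | swap x y l =>
      have hx : 1 ≤ x := hl x (by simp)
      have hy : 1 ≤ y := hl y (by simp)
      have hll : ∀ n ∈ l, 1 ≤ n := fun n hn => hl n (by simp [hn])
      rw [gList_cons, gList_cons, gList_cons, gList_cons]
      have hre : cyc o x + (cyc (o + x) y + gList (o + x + y) l) =
          cyc (o + x) y + (cyc o x + gList (o + x + y) l) := by
        rw [← add_assoc, ← add_assoc, add_comm (cyc o x) (cyc (o + x) y)]
      rw [hre]
      have hgl : gList (o + y + x) l = gList (o + x + y) l := by
        rw [show o + y + x = o + x + y by omega]
      refine (iso_cyc_shift hy o (o + x)).glue ?_ ?_ ?_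
      · rw [hgl]
        exact (iso_cyc_shift hx (o + y) o).glue (Isomorphic.refl _)
          (by rw [unionC_cyc hx (o + y), unionC_gList hll (o + x + y), Finset.Ico_inter_Ico]
              apply Finset.Ico_eq_empty; omega)
          (by rw [unionC_cyc hx o, unionC_gList hll (o + x + y), Finset.Ico_inter_Ico]
              apply Finset.Ico_eq_empty; omega)
      · rw [unionC_add, unionC_cyc hy o, unionC_cyc hx (o + y),
          unionC_gList hll (o + y + x)]
        ext a
        simp only [Finset.mem_inter, Finset.mem_union, Finset.mem_Ico,
          Finset.notMem_empty, iff_false, not_and, not_or]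
        intro h1
        constructor <;> intro <;> omega
      · rw [unionC_add, unionC_cyc hy (o + x), unionC_cyc hx o,
          unionC_gList hll (o + x + y)]
        ext a
        simp only [Finset.mem_inter, Finset.mem_union, Finset.mem_Ico,
          Finset.notMem_empty, iff_false, not_and, not_or]
        intro h1
        constructor <;> intro <;> omega
  | trans h1 h2 ih1 ih2 =>
      rename_i l1 l2 l3
      have hl2 : ∀ n ∈ l2, 1 ≤ n := fun n hn => hl n (h1.mem_iff.2 hn)
      exact (ih1 hl o).trans (ih2 hl2 o)

/-- adjacency: two points lie in a common member set -/
def adj (C : Multiset (Finset ℕ)) (a b : ℕ) : Prop := ∃ A ∈ C, a ∈ A ∧ b ∈ A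

/-- connectivity: reflexive-transitive closure of adjacency -/
def conn (C : Multiset (Finset ℕ)) : ℕ → ℕ → Prop := Relation.ReflTransGen (adj C)

/-- the connectivity class of a point -/
noncomputable def cclass (C : Multiset (Finset ℕ)) (a : ℕ) : Finset ℕ :=
  @Finset.filter _ (conn C a) (Classical.decPred _) (unionC C)

/-- the set of connectivity classes -/
noncomputable def classes (C : Multiset (Finset ℕ)) : Finset (Finset ℕ) :=
  (unionC C).image (cclass C)

/-- the multiset of class sizes: the isomorphism invariant -/
noncomputable def inv (C : Multiset (Finset ℕ)) : Multiset ℕ :=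
  (classes C).val.map Finset.card

lemma adj_symm {C : Multiset (Finset ℕ)} : Symmetric (adj C) :=
  fun _ _ ⟨A, hA, h1, h2⟩ => ⟨A, hA, h2, h1⟩

lemma conn_symm {C : Multiset (Finset ℕ)} {a b : ℕ} (h : conn C a b) : conn C b a :=
  have : Std.Symm (adj C) := ⟨fun a b h => adj_symm h⟩
  (Relation.ReflTransGen.stdSymm (r := adj C)).symm _ _ h

lemma conn_mem {C : Multiset (Finset ℕ)} {a b : ℕ} (h : conn C a b) :
    a = b ∨ b ∈ unionC C := by
  induction h with
  | refl => exact Or.inl rfl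
  | tail _ hadj _ =>
      obtain ⟨A, hA, _, hb⟩ := hadj
      exact Or.inr (mem_unionC.2 ⟨A, hA, hb⟩)

lemma mem_cclass {C : Multiset (Finset ℕ)} {a b : ℕ} :
    b ∈ cclass C a ↔ b ∈ unionC C ∧ conn C a b := by
  simp [cclass, Finset.mem_filter]

lemma cclass_subset {C : Multiset (Finset ℕ)} (a : ℕ) : cclass C a ⊆ unionC C :=
  fun b hb => (mem_cclass.1 hb).1

lemma mem_classes_subset {C : Multiset (Finset ℕ)} {K : Finset ℕ} (h : K ∈ classes C) :
    K ⊆ unionC C := by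
  obtain ⟨a, _, rfl⟩ := Finset.mem_image.1 h
  exact cclass_subset a

lemma unionC_map (C : Multiset (Finset ℕ)) (φ : ℕ → ℕ) :
    unionC (C.map (Finset.image φ)) = (unionC C).image φ := by
  unfold unionC
  induction C using Multiset.induction with
  | empty => simp
  | cons A S ih => simp [Multiset.sup_cons, ih, Finset.image_union]

lemma mem_unionC_map {C D : Multiset (Finset ℕ)} {φ : ℕ → ℕ}
    (hmap : C.map (Finset.image φ) = D) {a : ℕ} (ha : a ∈ unionC C) :
    φ a ∈ unionC D := by
  rw [← hmap, unionC_map]; exact Finset.mem_image_of_mem φ ha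

lemma conn_map {C D : Multiset (Finset ℕ)} {φ : ℕ → ℕ}
    (hmap : C.map (Finset.image φ) = D) {a b : ℕ} (h : conn C a b) :
    conn D (φ a) (φ b) := by
  induction h with
  | refl => exact Relation.ReflTransGen.refl
  | tail _ hadj ih =>
      obtain ⟨A, hA, h1, h2⟩ := hadj
      refine ih.tail ⟨A.image φ, ?_, Finset.mem_image_of_mem φ h1, Finset.mem_image_of_mem φ h2⟩
      rw [← hmap]
      exact Multiset.mem_map_of_mem _ hA

lemma map_invFunOn {C D : Multiset (Finset ℕ)} {φ : ℕ → ℕ}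
    (hbij : Set.BijOn φ ↑(unionC C) ↑(unionC D))
    (hmap : C.map (Finset.image φ) = D) :
    D.map (Finset.image (Function.invFunOn φ ↑(unionC C))) = C := by
  have hinv : ∀ a ∈ unionC C, Function.invFunOn φ ↑(unionC C) (φ a) = a := fun a ha =>
    hbij.injOn.leftInvOn_invFunOn ha
  rw [← hmap, Multiset.map_map]
  refine Multiset.map_congr rfl ?_ |>.trans (Multiset.map_id _)
  intro A hA
  simp only [Function.comp_apply, Finset.image_image, id]
  refine Finset.image_congr (fun a ha => hinv a (subset_unionC hA ha)) |>.trans ?_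
  exact Finset.image_id

lemma cclass_map {C D : Multiset (Finset ℕ)} {φ : ℕ → ℕ}
    (hbij : Set.BijOn φ ↑(unionC C) ↑(unionC D))
    (hmap : C.map (Finset.image φ) = D) {a : ℕ} (ha : a ∈ unionC C) :
    cclass D (φ a) = (cclass C a).image φ := by
  set ψ := Function.invFunOn φ ↑(unionC C) with hψ
  have hinv : ∀ x ∈ unionC C, ψ (φ x) = x := fun x hx =>
    hbij.injOn.leftInvOn_invFunOn hx
  have hmapψ := map_invFunOn hbij hmap
  ext b
  rw [mem_cclass, Finset.mem_image]
  constructor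
  · rintro ⟨hbD, hconn⟩
    have : b ∈ φ '' ↑(unionC C) := by rw [hbij.image_eq]; exact hbD
    obtain ⟨a', ha', rfl⟩ := this
    refine ⟨a', mem_cclass.2 ⟨ha', ?_⟩, rfl⟩
    have h2 := conn_map hmapψ hconn
    rw [show Function.invFunOn φ ↑(unionC C) (φ a) = a from hinv a ha,
        show Function.invFunOn φ ↑(unionC C) (φ a') = a' from hinv a' ha'] at h2
    exact h2
  · rintro ⟨a', ha', rfl⟩
    obtain ⟨ha'U, hconn⟩ := mem_cclass.1 ha'
    exact ⟨mem_unionC_map hmap ha'U, conn_map hmap hconn⟩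

lemma classes_map {C D : Multiset (Finset ℕ)} {φ : ℕ → ℕ}
    (hbij : Set.BijOn φ ↑(unionC C) ↑(unionC D))
    (hmap : C.map (Finset.image φ) = D) :
    classes D = (classes C).image (Finset.image φ) := by
  have hU : unionC D = (unionC C).image φ := by rw [← hmap, unionC_map]
  unfold classes
  rw [hU, Finset.image_image, Finset.image_image]
  refine Finset.image_congr (fun a ha => ?_)
  simp only [Function.comp_apply]
  exact cclass_map hbij hmap ha

lemma inv_iso {C D : Multiset (Finset ℕ)} (h : Isomorphic C D) : inv C = inv D := by
  obtain ⟨φ, hbij, hmap⟩ := h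
  have hinj : Set.InjOn (Finset.image φ) ↑(classes C) := by
    have key : ∀ K ∈ classes C, ∀ K' ∈ classes C,
        K.image φ = K'.image φ → K ⊆ K' := by
      intro K hK K' hK' he a haK
      have : φ a ∈ K'.image φ := by rw [← he]; exact Finset.mem_image_of_mem φ haK
      obtain ⟨a', ha', he'⟩ := Finset.mem_image.1 this
      have := hbij.injOn (Finset.mem_coe.2 (mem_classes_subset hK' ha'))
        (Finset.mem_coe.2 (mem_classes_subset hK haK)) he'
      rwa [← this]
    intro K hK K' hK' he
    exact Finset.Subset.antisymm (key K (Finset.mem_coe.1 hK) K' (Finset.mem_coe.1 hK') he)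
      (key K' (Finset.mem_coe.1 hK') K (Finset.mem_coe.1 hK) he.symm)
  unfold inv
  rw [classes_map hbij hmap, Finset.image_val_of_injOn hinj, Multiset.map_map]
  refine (Multiset.map_congr rfl (fun K hK => ?_)).symm
  show (Finset.card ∘ Finset.image φ) K = K.card
  exact Finset.card_image_of_injOn (hbij.injOn.mono
    (Finset.coe_subset.2 (mem_classes_subset hK)))

lemma conn_add_left {C D : Multiset (Finset ℕ)}
    (hdisj : unionC C ∩ unionC D = ∅) {a b : ℕ} (ha : a ∈ unionC C)
    (h : conn (C + D) a b) : conn C a b := by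
  induction h with
  | refl => exact Relation.ReflTransGen.refl
  | tail h1 hadj ih =>
      rename_i c b'
      have hc : c ∈ unionC C := by
        rcases conn_mem ih with heq | h
        · exact heq ▸ ha
        · exact h
      obtain ⟨A, hA, hcA, hbA⟩ := hadj
      rw [Multiset.mem_add] at hA
      rcases hA with hA | hA
      · exact ih.tail ⟨A, hA, hcA, hbA⟩
      · exfalso
        have : c ∈ unionC C ∩ unionC D :=
          Finset.mem_inter.2 ⟨hc, mem_unionC.2 ⟨A, hA, hcA⟩⟩
        simp [hdisj] at this

lemma conn_add_mono_left {C D : Multiset (Finset ℕ)} {a b : ℕ} (h : conn C a b) :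
    conn (C + D) a b :=
  Relation.ReflTransGen.mono
    (by intro x y hxy; obtain ⟨A, hA, h1, h2⟩ := hxy; exact ⟨A, Multiset.mem_add.2 (Or.inl hA), h1, h2⟩) _ _ h

lemma conn_add_mono_right {C D : Multiset (Finset ℕ)} {a b : ℕ} (h : conn D a b) :
    conn (C + D) a b :=
  Relation.ReflTransGen.mono
    (by intro x y hxy; obtain ⟨A, hA, h1, h2⟩ := hxy; exact ⟨A, Multiset.mem_add.2 (Or.inr hA), h1, h2⟩) _ _ h

lemma cclass_add_left {C D : Multiset (Finset ℕ)}
    (hdisj : unionC C ∩ unionC D = ∅) {a : ℕ} (ha : a ∈ unionC C) :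
    cclass (C + D) a = cclass C a := by
  ext b
  rw [mem_cclass, mem_cclass, unionC_add, Finset.mem_union]
  constructor
  · rintro ⟨_, hconn⟩
    have hcb := conn_add_left hdisj ha hconn
    refine ⟨?_, hcb⟩
    rcases conn_mem hcb with heq | h
    · exact heq ▸ ha
    · exact h
  · rintro ⟨hb, hconn⟩
    exact ⟨Or.inl hb, conn_add_mono_left hconn⟩

lemma cclass_add_right {C D : Multiset (Finset ℕ)}
    (hdisj : unionC C ∩ unionC D = ∅) {a : ℕ} (ha : a ∈ unionC D) :
    cclass (C + D) a = cclass D a := by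
  rw [add_comm]
  exact cclass_add_left (by rw [Finset.inter_comm]; exact hdisj) ha

lemma classes_add {C D : Multiset (Finset ℕ)}
    (hdisj : unionC C ∩ unionC D = ∅) :
    classes (C + D) = classes C ∪ classes D := by
  unfold classes
  rw [unionC_add, Finset.image_union]
  congr 1
  · exact Finset.image_congr (fun a ha => cclass_add_left hdisj ha)
  · exact Finset.image_congr (fun a ha => cclass_add_right hdisj ha)

lemma conn_cyc_zero {n : ℕ} (o : ℕ) : ∀ i, i < n → conn (cyc o n) (0 + o) (i + o) := by
  intro i
  induction i with
  | zero => intro _; exact Relation.ReflTransGen.refl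
  | succ i ih =>
      intro hi
      refine (ih (by omega)).tail ⟨{i + o, cnext n i + o}, mem_cyc.2 ⟨i, by omega, rfl⟩, ?_, ?_⟩
      · simp
      · have : cnext n i = i + 1 := by unfold cnext; split <;> omega
        rw [this]; simp

lemma cclass_cyc {n : ℕ} (hn : 1 ≤ n) {o a : ℕ} (ha : a ∈ Finset.Ico o (o + n)) :
    cclass (cyc o n) a = Finset.Ico o (o + n) := by
  ext b
  rw [mem_cclass, unionC_cyc hn o]
  simp only [Finset.mem_Ico] at ha ⊢
  constructor
  · rintro ⟨h, _⟩; exact h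
  · intro hb
    refine ⟨hb, ?_⟩
    have h1 : conn (cyc o n) (0 + o) (a - o + o) := conn_cyc_zero o _ (by omega)
    have h2 : conn (cyc o n) (0 + o) (b - o + o) := conn_cyc_zero o _ (by omega)
    have h3 := (conn_symm h1).trans h2
    rw [show a - o + o = a by omega, show b - o + o = b by omega] at h3
    exact h3

lemma classes_cyc {n : ℕ} (hn : 1 ≤ n) (o : ℕ) :
    classes (cyc o n) = {Finset.Ico o (o + n)} := by
  unfold classes
  rw [unionC_cyc hn o]
  have h1 : (Finset.Ico o (o + n)).image (cclass (cyc o n)) =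
      (Finset.Ico o (o + n)).image (fun _ => Finset.Ico o (o + n)) :=
    Finset.image_congr (fun a ha => cclass_cyc hn ha)
  rw [h1]
  rw [Finset.image_const (by rw [Finset.nonempty_Ico]; omega) _]

lemma inv_gList {l : List ℕ} (hl : ∀ n ∈ l, 2 ≤ n) :
    ∀ o, inv (gList o l) = ↑l := by
  induction l with
  | nil => intro o; simp [gList, inv, classes, unionC_zero]
  | cons n l ih =>
      intro o
      have hn : 2 ≤ n := hl n (by simp)
      have hl' : ∀ m ∈ l, 2 ≤ m := fun m hm => hl m (by simp [hm])
      have hdisj : unionC (cyc o n) ∩ unionC (gList (o + n) l) = ∅ := by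
        rw [unionC_cyc (by omega) o, unionC_gList (fun m hm => by have := hl' m hm; omega) (o + n),
          Finset.Ico_inter_Ico]
        apply Finset.Ico_eq_empty; omega
      rw [gList_cons]
      unfold inv
      rw [classes_add hdisj, classes_cyc (by omega) o]
      have hnotmem : Finset.Ico o (o + n) ∉ classes (gList (o + n) l) := by
        intro hmem
        have hsub := mem_classes_subset hmem
        rw [unionC_gList (fun m hm => by have := hl' m hm; omega) (o + n)] at hsub
        have : o ∈ Finset.Ico o (o + n) := by rw [Finset.mem_Ico]; omega
        have := hsub this
        rw [Finset.mem_Ico] at this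
        omega
      rw [← Finset.insert_eq, Finset.insert_val_of_notMem hnotmem, Multiset.map_cons]
      have := ih hl' (o + n)
      unfold inv at this
      rw [this, Nat.card_Ico]
      simp

/-- The multiset of the first `k` edges of a walk. -/
def Es (e : ℕ → Finset ℕ) (k : ℕ) : Multiset (Finset ℕ) := (Multiset.range k).map e

/-- An open walk of length `k`: `k` consecutive edges on `k+1` distinct vertices. -/
def OpenWalk (C : Multiset (Finset ℕ)) (v : ℕ → ℕ) (e : ℕ → Finset ℕ) (k : ℕ) : Prop :=
  (∀ i, i < k → e i = {v i, v (i+1)}) ∧ Es e k ≤ C ∧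
  (∀ i j, i ≤ k → j ≤ k → v i = v j → i = j)

lemma ow_mem_union {C : Multiset (Finset ℕ)} {v : ℕ → ℕ} {e : ℕ → Finset ℕ} {k : ℕ}
    (h : OpenWalk C v e k) (hk : 1 ≤ k) {i : ℕ} (hi : i ≤ k) : v i ∈ unionC C := by
  obtain ⟨he, hle, _⟩ := h
  rcases Nat.lt_or_ge i k with hik | hik
  · refine mem_unionC.2 ⟨e i, Multiset.mem_of_le hle ?_, ?_⟩
    · exact Multiset.mem_map.2 ⟨i, Multiset.mem_range.2 hik, rfl⟩
    · rw [he i hik]; simp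
  · have hik' : i = k := by omega
    rw [hik']
    refine mem_unionC.2 ⟨e (k - 1), Multiset.mem_of_le hle ?_, ?_⟩
    · exact Multiset.mem_map.2 ⟨k - 1, Multiset.mem_range.2 (by omega), rfl⟩
    · rw [he (k - 1) (by omega), show k - 1 + 1 = k by omega]; simp

lemma countP_Es {e : ℕ → Finset ℕ} {k : ℕ} (x : ℕ) :
    Multiset.countP (fun A => x ∈ A) (Es e k) =
      (Finset.filter (fun j => x ∈ e j) (Finset.range k)).card := by
  classical
  unfold Es
  rw [Multiset.countP_map]
  rfl

lemma ow_countP_last {C : Multiset (Finset ℕ)} {v : ℕ → ℕ} {e : ℕ → Finset ℕ} {k : ℕ}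
    (h : OpenWalk C v e k) (hk : 1 ≤ k) :
    Multiset.countP (fun A => v k ∈ A) (Es e k) = 1 := by
  classical
  obtain ⟨he, _, hdist⟩ := h
  rw [countP_Es]
  have : Finset.filter (fun j => v k ∈ e j) (Finset.range k) = {k - 1} := by
    ext j
    simp only [Finset.mem_filter, Finset.mem_range, Finset.mem_singleton]
    constructor
    · rintro ⟨hj, hmem⟩
      rw [he j hj] at hmem
      simp only [Finset.mem_insert, Finset.mem_singleton] at hmem
      rcases hmem with hm | hm
      · have := hdist k j (le_refl k) (by omega) hm; omega
      · have := hdist k (j + 1) (le_refl k) (by omega) hm; omega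
    · rintro rfl
      refine ⟨by omega, ?_⟩
      rw [he (k - 1) (by omega), show k - 1 + 1 = k by omega]
      simp
  rw [this, Finset.card_singleton]

lemma ow_countP_mid {C : Multiset (Finset ℕ)} {v : ℕ → ℕ} {e : ℕ → Finset ℕ} {k i : ℕ}
    (h : OpenWalk C v e k) (hi : 1 ≤ i) (hik : i < k) :
    Multiset.countP (fun A => v i ∈ A) (Es e k) = 2 := by
  classical
  obtain ⟨he, _, hdist⟩ := h
  rw [countP_Es]
  have : Finset.filter (fun j => v i ∈ e j) (Finset.range k) = {i, i - 1} := by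
    ext j
    simp only [Finset.mem_filter, Finset.mem_range, Finset.mem_insert, Finset.mem_singleton]
    constructor
    · rintro ⟨hj, hmem⟩
      rw [he j hj] at hmem
      simp only [Finset.mem_insert, Finset.mem_singleton] at hmem
      rcases hmem with hm | hm
      · have := hdist i j (by omega) (by omega) hm; omega
      · have := hdist i (j + 1) (by omega) (by omega) hm; omega
    · rintro (hji | hji)
      · refine ⟨by omega, ?_⟩
        rw [hji, he i hik]; simp
      · refine ⟨by omega, ?_⟩
        rw [hji, he (i - 1) (by omega), show i - 1 + 1 = i by omega]
        simp
  rw [this, Finset.card_insert_of_notMem (by simp; omega), Finset.card_singleton]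

lemma walk_start {C : Multiset (Finset ℕ)} (hC : C ≠ 0) (h2 : ∀ A ∈ C, A.card = 2) :
    ∃ v e, OpenWalk C v e 1 := by
  obtain ⟨A, hA⟩ := Multiset.exists_mem_of_ne_zero hC
  obtain ⟨a, b, hab, rfl⟩ := Finset.card_eq_two.1 (h2 A hA)
  refine ⟨fun i => if i = 0 then a else b, fun _ => {a, b}, ?_, ?_, ?_⟩
  · intro i hi
    have : i = 0 := by omega
    subst this; simp
  · unfold Es
    rw [show Multiset.range 1 = {0} from rfl, Multiset.map_singleton, Multiset.singleton_le]
    exact hA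
  · intro i j hi hj hv
    have hi' : i = 0 ∨ i = 1 := by omega
    have hj' : j = 0 ∨ j = 1 := by omega
    rcases hi' with rfl | rfl <;> rcases hj' with rfl | rfl <;> simp at hv <;>
      first
        | rfl
        | (exact absurd hv hab)
        | (exact absurd hv.symm hab)

lemma walk_step {C : Multiset (Finset ℕ)} {v : ℕ → ℕ} {e : ℕ → Finset ℕ} {k : ℕ}
    (hDC : IsDoubleCover C) (h2 : ∀ A ∈ C, A.card = 2)
    (h : OpenWalk C v e k) (hk : 1 ≤ k) :
    (∃ v' e', OpenWalk C v' e' (k + 1)) ∨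
    (∃ m w, 2 ≤ m ∧ (∀ i j, i < m → j < m → w i = w j → i = j) ∧
      (cyc 0 m).map (Finset.image w) ≤ C) := by
  classical
  have hsplit : ∀ x : ℕ, Multiset.countP (fun A => x ∈ A) C =
      Multiset.countP (fun A => x ∈ A) (Es e k) +
      Multiset.countP (fun A => x ∈ A) (C - Es e k) := by
    intro x
    conv_lhs => rw [← add_tsub_cancel_of_le h.2.1]
    rw [Multiset.countP_add]
  have hvk : v k ∈ unionC C := ow_mem_union h hk (le_refl k)
  have hck : Multiset.countP (fun A => v k ∈ A) (C - Es e k) = 1 := by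
    have := hsplit (v k)
    rw [hDC (v k) hvk, ow_countP_last h hk] at this
    omega
  have hex : ∃ A ∈ C - Es e k, v k ∈ A := by
    rw [← Multiset.countP_pos]
    omega
  obtain ⟨A, hA, hvkA⟩ := hex
  have hAC : A ∈ C := Multiset.mem_of_le (tsub_le_self) hA
  obtain ⟨a, b, hab, habA⟩ := Finset.card_eq_two.1 (h2 A hAC)
  -- find the other endpoint u
  have hu : ∃ u, u ≠ v k ∧ A = {v k, u} := by
    subst habA
    simp only [Finset.mem_insert, Finset.mem_singleton] at hvkA
    rcases hvkA with rfl | rfl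
    · exact ⟨b, fun hbe => hab hbe.symm, rfl⟩
    · exact ⟨a, fun hae => hab hae, by rw [Finset.pair_comm]⟩
  obtain ⟨u, hu_ne, hAeq⟩ := hu
  have hDle : A ::ₘ Es e k ≤ C := by
    have h1 : Es e k + {A} ≤ Es e k + (C - Es e k) :=
      add_le_add_right (Multiset.singleton_le.2 hA) _
    rw [add_tsub_cancel_of_le h.2.1] at h1
    rwa [add_comm, Multiset.singleton_add] at h1
  -- no internal revisit
  have hint : ∀ j, 1 ≤ j → j ≤ k → u ≠ v j := by
    intro j hj1 hjk hu_eq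
    rcases Nat.lt_or_ge j k with hjlt | hjge
    · have hvj : v j ∈ unionC C := ow_mem_union h hk (by omega)
      have hc2 := hsplit (v j)
      rw [hDC (v j) hvj, ow_countP_mid h hj1 hjlt] at hc2
      have hpos : 0 < Multiset.countP (fun A => v j ∈ A) (C - Es e k) :=
        Multiset.countP_pos.2 ⟨A, hA, by rw [hAeq, ← hu_eq]; simp⟩
      omega
    · have : j = k := by omega
      subst this
      exact hu_ne hu_eq
  by_cases hu0 : u = v 0
  · -- walk closes: we have a cycle of length k+1
    right
    refine ⟨k + 1, v, by omega, fun i j hi hj => h.2.2 i j (by omega) (by omega), ?_⟩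
    have hDeq : (cyc 0 (k + 1)).map (Finset.image v) = A ::ₘ Es e k := by
      unfold cyc Es
      rw [Multiset.map_map, Multiset.range_succ, Multiset.map_cons]
      congr 1
      · have hc : cnext (k + 1) k = 0 := by unfold cnext; simp
        rw [Function.comp_apply, hc, hAeq, hu0]
        simp [Finset.image_insert, Finset.image_singleton]
      · refine Multiset.map_congr rfl (fun i hi => ?_)
        rw [Multiset.mem_range] at hi
        have hc : cnext (k + 1) i = i + 1 := by unfold cnext; split <;> omega
        rw [Function.comp_apply, hc, h.1 i hi]
        simp [Finset.image_insert, Finset.image_singleton]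
    rw [hDeq]
    exact hDle
  · -- walk extends
    left
    refine ⟨Function.update v (k + 1) u, Function.update e k A, ?_, ?_, ?_⟩
    · intro i hi
      rcases Nat.lt_or_ge i k with hik | hik
      · rw [Function.update_of_ne (by omega), Function.update_of_ne (by omega : i ≠ k + 1),
          Function.update_of_ne (by omega : i + 1 ≠ k + 1)]
        exact h.1 i hik
      · have hik' : i = k := by omega
        rw [hik']
        rw [Function.update_self, Function.update_of_ne (by omega : k ≠ k + 1),
          Function.update_self]
        exact hAeq
    · have hEs : Es (Function.update e k A) (k + 1) = A ::ₘ Es e k := by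
        unfold Es
        rw [Multiset.range_succ, Multiset.map_cons, Function.update_self]
        congr 1
        refine Multiset.map_congr rfl (fun i hi => ?_)
        rw [Multiset.mem_range] at hi
        rw [Function.update_of_ne (by omega)]
      rw [hEs]
      exact hDle
    · intro i j hi hj hv
      rcases Nat.lt_or_ge i (k + 1) with hik | hik <;>
        rcases Nat.lt_or_ge j (k + 1) with hjk | hjk
      · rw [Function.update_of_ne (by omega), Function.update_of_ne (by omega)] at hv
        exact h.2.2 i j (by omega) (by omega) hv
      · have hj' : j = k + 1 := by omega
        subst hj'
        rw [Function.update_of_ne (by omega), Function.update_self] at hv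
        exfalso
        rcases Nat.eq_zero_or_pos i with rfl | hi0
        · exact hu0 hv.symm
        · exact hint i hi0 (by omega) hv.symm
      · have hi' : i = k + 1 := by omega
        subst hi'
        rw [Function.update_self, Function.update_of_ne (by omega)] at hv
        exfalso
        rcases Nat.eq_zero_or_pos j with rfl | hj0
        · exact hu0 hv
        · exact hint j hj0 (by omega) hv
      · omega

lemma ow_bound {C : Multiset (Finset ℕ)} {v : ℕ → ℕ} {e : ℕ → Finset ℕ} {k : ℕ}
    (h : OpenWalk C v e k) (hk : 1 ≤ k) : k < (unionC C).card := by
  have hmaps : ∀ i ∈ Finset.range (k + 1), v i ∈ unionC C := fun i hi =>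
    ow_mem_union h hk (by rw [Finset.mem_range] at hi; omega)
  have hinj : Set.InjOn v ↑(Finset.range (k + 1)) := by
    intro i hi j hj hv
    simp only [Finset.coe_range, Set.mem_Iio] at hi hj
    exact h.2.2 i j (by omega) (by omega) hv
  have := Finset.card_le_card_of_injOn v hmaps hinj
  rw [Finset.card_range] at this
  omega

lemma extract {C : Multiset (Finset ℕ)} (hDC : IsDoubleCover C)
    (h2 : ∀ A ∈ C, A.card = 2) (hC : C ≠ 0) :
    ∃ m w, 2 ≤ m ∧ (∀ i j, i < m → j < m → w i = w j → i = j) ∧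
      (cyc 0 m).map (Finset.image w) ≤ C := by
  by_contra hno
  have hwalk : ∀ k, ∃ v e, OpenWalk C v e (k + 1) := by
    intro k
    induction k with
    | zero => exact walk_start hC h2
    | succ k ih =>
        obtain ⟨v, e, hw⟩ := ih
        rcases walk_step hDC h2 hw (by omega) with h | h
        · exact h
        · exact absurd h hno
  obtain ⟨v, e, hw⟩ := hwalk (unionC C).card
  have := ow_bound hw (by omega)
  omega

lemma cyc_map_countP {m : ℕ} (hm : 2 ≤ m) {w : ℕ → ℕ}
    (hinj : ∀ i j, i < m → j < m → w i = w j → i = j) {x : ℕ}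
    (hx : x ∈ unionC ((cyc 0 m).map (Finset.image w))) :
    Multiset.countP (fun A => x ∈ A) ((cyc 0 m).map (Finset.image w)) = 2 := by
  classical
  rw [unionC_map, unionC_cyc (by omega) 0, zero_add] at hx
  obtain ⟨i, hi, rfl⟩ := Finset.mem_image.1 hx
  rw [Finset.mem_Ico] at hi
  rw [Multiset.countP_map]
  have hfc : (cyc 0 m).filter (fun A => w i ∈ A.image w) =
      (cyc 0 m).filter (fun A => i ∈ A) := by
    refine Multiset.filter_congr (fun A hA => ?_)
    obtain ⟨j, hj, rfl⟩ := mem_cyc.1 hA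
    have hcl := cnext_lt hj
    simp only [Finset.image_insert, Finset.image_singleton, Finset.mem_insert,
      Finset.mem_singleton]
    constructor
    · rintro (hw | hw)
      · left; exact hinj i (j + 0) (by omega) (by omega) hw
      · right; exact hinj i (cnext m j + 0) (by omega) (by omega) hw
    · rintro (rfl | rfl) <;> simp
  rw [hfc, ← Multiset.countP_eq_card_filter]
  simpa using countP_cyc hm (by omega : i < m) 0

lemma classify : ∀ (n : ℕ) (C : Multiset (Finset ℕ)), Multiset.card C = n →
    IsDoubleCover C → (∀ A ∈ C, A.card = 2) →
    ∃ l : List ℕ, (∀ m ∈ l, 2 ≤ m) ∧ l.sum = n ∧ Isomorphic C (gList 0 l) := by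
  intro n
  induction n using Nat.strong_induction_on with
  | _ n ih =>
    intro C hcard hDC h2
    rcases eq_or_ne C 0 with rfl | hC
    · refine ⟨[], by simp, by simp [← hcard], ?_⟩
      show Isomorphic 0 (gList 0 [])
      exact Isomorphic.refl _
    obtain ⟨m, w, hm, hinj, hD⟩ := extract hDC h2 hC
    set D := (cyc 0 m).map (Finset.image w) with hDdef
    have hcardD : Multiset.card D = m := by rw [hDdef, Multiset.card_map, card_cyc]
    have hmn : m ≤ n := by
      rw [← hcard, ← hcardD]
      exact Multiset.card_le_card hD
    have hn0 : 2 ≤ n := le_trans hm hmn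
    have hsplit : ∀ x : ℕ, Multiset.countP (fun A => x ∈ A) C =
        Multiset.countP (fun A => x ∈ A) D +
        Multiset.countP (fun A => x ∈ A) (C - D) := by
      intro x
      conv_lhs => rw [← add_tsub_cancel_of_le hD]
      rw [Multiset.countP_add]
    have hUD : ∀ x ∈ unionC D, x ∈ unionC C := by
      intro x hx
      obtain ⟨A, hA, hxA⟩ := mem_unionC.1 hx
      exact mem_unionC.2 ⟨A, Multiset.mem_of_le hD hA, hxA⟩
    have hdisj : unionC D ∩ unionC (C - D) = ∅ := by
      ext x
      simp only [Finset.mem_inter, Finset.notMem_empty, iff_false, not_and]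
      intro hxD hxR
      have h1 := hsplit x
      rw [hDC x (hUD x hxD), cyc_map_countP hm hinj hxD] at h1
      obtain ⟨A, hA, hxA⟩ := mem_unionC.1 hxR
      have hpos : 0 < Multiset.countP (fun A => x ∈ A) (C - D) :=
        Multiset.countP_pos.2 ⟨A, hA, hxA⟩
      omega
    have hDC' : IsDoubleCover (C - D) := by
      intro x hx
      have hxC : x ∈ unionC C := by
        obtain ⟨A, hA, hxA⟩ := mem_unionC.1 hx
        exact mem_unionC.2 ⟨A, Multiset.mem_of_le tsub_le_self hA, hxA⟩
      have hxD : x ∉ unionC D := by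
        intro hxD
        have : x ∈ unionC D ∩ unionC (C - D) := Finset.mem_inter.2 ⟨hxD, hx⟩
        simp [hdisj] at this
      have h1 := hsplit x
      rw [hDC x hxC, countP_eq_zero_of_not_mem_unionC hxD] at h1
      omega
    have h2' : ∀ A ∈ C - D, A.card = 2 := fun A hA =>
      h2 A (Multiset.mem_of_le tsub_le_self hA)
    have hcard' : Multiset.card (C - D) = n - m := by
      rw [Multiset.card_sub hD, hcard, hcardD]
    obtain ⟨l, hl2, hlsum, hliso⟩ := ih (n - m) (by omega) (C - D) hcard' hDC' h2'
    refine ⟨m :: l, ?_, ?_, ?_⟩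
    · intro x hx
      rcases List.mem_cons.1 hx with rfl | hx
      · exact hm
      · exact hl2 x hx
    · simp [List.sum_cons, hlsum]; omega
    · have hiso1 : Isomorphic D (cyc 0 m) := by
        refine Isomorphic.symm ⟨w, ?_, rfl⟩
        rw [unionC_cyc (by omega) 0, zero_add, unionC_map, unionC_cyc (by omega) 0, zero_add]
        rw [Finset.coe_image]
        refine Set.InjOn.bijOn_image ?_
        intro i hi j hj hw
        simp only [Finset.coe_Ico, Set.mem_Ico] at hi hj
        exact hinj i j (by omega) (by omega) hw
      have hiso2 : Isomorphic (C - D) (gList m l) :=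
        hliso.trans (iso_gList_shift (fun x hx => by have := hl2 x hx; omega) 0 m)
      have htgt : unionC (cyc 0 m) ∩ unionC (gList m l) = ∅ := by
        rw [unionC_cyc (by omega) 0, zero_add,
          unionC_gList (fun x hx => by have := hl2 x hx; omega) m, Finset.Ico_inter_Ico]
        apply Finset.Ico_eq_empty; omega
      have hfinal := hiso1.glue hiso2 hdisj htgt
      rw [add_tsub_cancel_of_le hD] at hfinal
      rw [show gList 0 (m :: l) = cyc 0 m + gList (0 + m) l from rfl, zero_add]
      exact hfinal

lemma card_partition_ge2 (p : ℕ) (hp : 1 ≤ p) :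
    Fintype.card {q : Nat.Partition p // ∀ i ∈ q.parts, 2 ≤ i} =
      Fintype.card (Nat.Partition p) - Fintype.card (Nat.Partition (p - 1)) := by
  classical
  have hiff : ∀ q : Nat.Partition p, (∀ i ∈ q.parts, 2 ≤ i) ↔ ¬ (1 ∈ q.parts) := by
    intro q
    constructor
    · intro h h1
      have := h 1 h1
      omega
    · intro h i hi
      have h0 := q.parts_pos hi
      have h1 : i ≠ 1 := fun he => h (he ▸ hi)
      omega
  rw [Fintype.card_congr (Equiv.subtypeEquivRight hiff)]
  rw [Fintype.card_subtype_compl]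
  congr 1
  refine Fintype.card_congr ?_
  refine ⟨fun q => ⟨q.1.parts.erase 1, ?_, ?_⟩, fun m =>
    ⟨⟨1 ::ₘ m.parts, ?_, ?_⟩, Multiset.mem_cons_self 1 _⟩, ?_, ?_⟩
  · intro i hi
    exact q.1.parts_pos (Multiset.mem_of_mem_erase hi)
  · have h1 := q.1.parts_sum
    have h2 := congrArg Multiset.sum (Multiset.cons_erase q.2)
    rw [Multiset.sum_cons, h1] at h2
    omega
  · intro i hi
    rcases Multiset.mem_cons.1 hi with rfl | h
    · omega
    · exact m.parts_pos h
  · rw [Multiset.sum_cons, m.parts_sum]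
    omega
  · intro q
    apply Subtype.ext
    apply Nat.Partition.ext
    exact Multiset.cons_erase q.2
  · intro m
    apply Nat.Partition.ext
    exact Multiset.erase_cons_head 1 _

/-- for every integer `p ≥ 2`, `μ_{2,p}(full) = ν(p) - ν(p-1)`,
where `ν(n)` is the number of partitions of `n`. -/
theorem stmt0 (p : ℕ) (hp : 2 ≤ p) :
    muFull 2 p = Fintype.card (Nat.Partition p) - Fintype.card (Nat.Partition (p - 1)) := by
  classical
  have hstruct : ∀ C : {C : Multiset (Finset ℕ) //
      Multiset.card C = p ∧ IsDoubleCover C ∧ ∀ A ∈ C, A.card = 2},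
      ∃ l : List ℕ, (∀ m ∈ l, 2 ≤ m) ∧ l.sum = p ∧ Isomorphic C.1 (gList 0 l) :=
    fun C => classify p C.1 C.2.1 C.2.2.1 C.2.2.2
  have hinv2 : ∀ C : {C : Multiset (Finset ℕ) //
      Multiset.card C = p ∧ IsDoubleCover C ∧ ∀ A ∈ C, A.card = 2},
      (∀ i ∈ inv C.1, 2 ≤ i) ∧ (inv C.1).sum = p := by
    intro C
    obtain ⟨l, hl, hsum, hiso⟩ := hstruct C
    have heq : inv C.1 = ↑l := (inv_iso hiso).trans (inv_gList hl 0)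
    rw [heq]
    constructor
    · intro i hi
      exact hl i (by exact_mod_cast hi)
    · rw [Multiset.sum_coe, hsum]
  have e : Quot (fun C D : {C : Multiset (Finset ℕ) //
      Multiset.card C = p ∧ IsDoubleCover C ∧ ∀ A ∈ C, A.card = 2} =>
        Isomorphic C.1 D.1) ≃ {q : Nat.Partition p // ∀ i ∈ q.parts, 2 ≤ i} := by
    refine
      { toFun := Quot.lift
          (fun C => (⟨⟨inv C.1, fun {i} hi => by have := (hinv2 C).1 i hi; omega,
            (hinv2 C).2⟩, (hinv2 C).1⟩ :
              {q : Nat.Partition p // ∀ i ∈ q.parts, 2 ≤ i}))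
          (fun C D h => ?_)
        invFun := fun q => Quot.mk _ ⟨gList 0 q.1.parts.toList, ?_, ?_, ?_⟩
        left_inv := ?_
        right_inv := ?_ }
    · apply Subtype.ext
      apply Nat.Partition.ext
      exact inv_iso h
    · rw [card_gList q.1.parts.toList 0]
      have : (↑(q.1.parts.toList) : Multiset ℕ).sum = q.1.parts.sum := by
        rw [Multiset.coe_toList]
      rw [Multiset.sum_coe] at this
      rw [this, q.1.parts_sum]
    · exact isDoubleCover_gList
        (fun m hm => q.2 m (by rwa [← Multiset.mem_toList])) 0
    · exact card_two_gList
        (fun m hm => q.2 m (by rwa [← Multiset.mem_toList])) 0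
    · apply Quot.ind
      intro C
      apply Quot.sound
      show Isomorphic (gList 0 (inv C.1).toList) C.1
      obtain ⟨l, hl, hsum, hiso⟩ := hstruct C
      have heq : inv C.1 = ↑l := (inv_iso hiso).trans (inv_gList hl 0)
      have hmem : ∀ m ∈ (inv C.1).toList, 1 ≤ m := by
        intro m hm
        have : m ∈ inv C.1 := by rwa [Multiset.mem_toList] at hm
        rw [heq] at this
        have := hl m (by exact_mod_cast this)
        omega
      have hperm : (inv C.1).toList.Perm l := by
        refine Multiset.coe_eq_coe.1 ?_
        rw [Multiset.coe_toList, heq]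
      exact (iso_gList_perm hperm hmem 0).trans hiso.symm
    · intro q
      apply Subtype.ext
      apply Nat.Partition.ext
      show inv (gList 0 q.1.parts.toList) = q.1.parts
      rw [inv_gList (fun m hm => q.2 m (by rwa [← Multiset.mem_toList])) 0,
        Multiset.coe_toList]
  rw [muFull, Nat.card_congr e, Nat.card_eq_fintype_card,
    card_partition_ge2 p (by omega)]
end

section
/- Let l, p ≥ 2 be integers with pl even, and let bar-D*_{l,p} denote the set of ordered p-tuples (A_1,…,A_p) of subsets of {1,…,pl/2} such that the multiset {A_1,…,A_p} belongs to D*_{l,p}. Then #(bar-D*_{l,p}) / p! ≤ #(D*_{l,p}) ≤ 2^{p/2} · #(bar-D*_{l,p}) / p!. -/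
/-- The family of ordered `p`-tuples of subsets of `{1,…,pl/2}` whose underlying
multiset belongs to `D*_{l,p}`. -/
def barDstar (l p : ℕ) : Set (Fin p → Finset ℕ) :=
  {f | (↑(List.ofFn f) : Multiset (Finset ℕ)) ∈ Dstar l p}

private lemma three_mem {α : Type*} [DecidableEq α] {s : Finset α} (hs : s.card ≤ 2)
    {a b c : α} (ha : a ∈ s) (hb : b ∈ s) (hc : c ∈ s) (hab : a ≠ b) (hac : a ≠ c) : b = c := by
  by_contra hbc
  have h3 : ({a, b, c} : Finset α) ⊆ s := by
    intro x hx
    simp only [Finset.mem_insert, Finset.mem_singleton] at hx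
    rcases hx with rfl | rfl | rfl <;> assumption
  have hcard : ({a, b, c} : Finset α).card = 3 := by
    rw [Finset.card_insert_of_notMem (by simp [hab, hac]),
      Finset.card_insert_of_notMem (by simp [hbc]), Finset.card_singleton]
  have := Finset.card_le_card h3
  omega

private lemma countP_coe_ofFn {p : ℕ} (f : Fin p → Finset ℕ) (pr : Finset ℕ → Prop)
    [DecidablePred pr] :
    Multiset.countP pr (↑(List.ofFn f) : Multiset (Finset ℕ))
      = (Finset.univ.filter (fun i => pr (f i))).card := by
  rw [List.ofFn_eq_map]
  rw [show ((List.map f (List.finRange p) : List (Finset ℕ)) : Multiset (Finset ℕ))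
      = Multiset.map f ↑(List.finRange p) from rfl]
  rw [Multiset.countP_map]
  rfl

private lemma mult_le_two {l p : ℕ} {f : Fin p → Finset ℕ} (hf : f ∈ barDstar l p) (i : Fin p) :
    (Finset.univ.filter (fun j => f j = f i)).card ≤ 2 := by
  classical
  obtain ⟨hc, hdc, hsub, hcard⟩ := hf
  have hmem : f i ∈ (↑(List.ofFn f) : Multiset (Finset ℕ)) := by
    rw [Multiset.mem_coe, List.mem_ofFn]
    exact ⟨i, rfl⟩
  obtain ⟨a, ha⟩ : (f i).Nonempty := by
    have := (hcard (f i) hmem).1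
    exact Finset.card_pos.mp (by omega)
  have haU : a ∈ unionC (↑(List.ofFn f)) := (Multiset.le_sup hmem : f i ⊆ _) ha
  have h2 := hdc a haU
  have key : (Finset.univ.filter (fun j => a ∈ f j)).card = 2 := by
    rw [← countP_coe_ofFn f (fun A => a ∈ A)]
    exact h2
  calc (Finset.univ.filter (fun j => f j = f i)).card
      ≤ (Finset.univ.filter (fun j => a ∈ f j)).card := by
        apply Finset.card_le_card
        intro j hj
        simp only [Finset.mem_filter, Finset.mem_univ, true_and] at hj ⊢
        rw [hj]; exact ha
    _ = 2 := key

private lemma stab_card_le {l p : ℕ} {f : Fin p → Finset ℕ} (hf : f ∈ barDstar l p) :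
    (Finset.univ.filter (fun σ : Equiv.Perm (Fin p) => ∀ i, f (σ i) = f i)).card
      ≤ 2 ^ (p / 2) := by
  classical
  have key3 : ∀ k b c : Fin p, f b = f k → f c = f k → k ≠ b → k ≠ c → b = c := by
    intro k b c hb hc hkb hkc
    refine three_mem (mult_le_two hf k) ?_ ?_ ?_ hkb hkc <;>
      simp only [Finset.mem_filter, Finset.mem_univ, true_and]
    exacts [hb, hc]
  set D : Finset (Fin p) := Finset.univ.filter (fun i => ∃ j, i < j ∧ f j = f i) with hDdef
  have hDcard : D.card ≤ p / 2 := by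
    set prt : Fin p → Fin p :=
      fun i => if h : ∃ j, i < j ∧ f j = f i then h.choose else i with hprt
    have hspec : ∀ i ∈ D, i < prt i ∧ f (prt i) = f i := by
      intro i hi
      have h : ∃ j, i < j ∧ f j = f i := by
        simpa [hDdef] using hi
      simpa [hprt, dif_pos h] using h.choose_spec
    have hinj : Set.InjOn prt ↑D := by
      intro i₁ h₁ i₂ h₂ he
      obtain ⟨hlt₁, hf₁⟩ := hspec i₁ (by simpa using h₁)
      obtain ⟨hlt₂, hf₂⟩ := hspec i₂ (by simpa using h₂)
      refine key3 (prt i₁) i₁ i₂ hf₁.symm ?_ (ne_of_gt hlt₁) ?_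
      · rw [he]; exact hf₂.symm
      · rw [he]; exact ne_of_gt hlt₂
    have hdisj : Disjoint D (D.image prt) := by
      rw [Finset.disjoint_left]
      intro x hxD hximg
      obtain ⟨i, hiD, rfl⟩ := Finset.mem_image.mp hximg
      obtain ⟨hlt, hfp⟩ := hspec i hiD
      have hx : ∃ j, prt i < j ∧ f j = f (prt i) := by
        simpa [hDdef] using hxD
      obtain ⟨j, hij, hfj⟩ := hx
      have : i = j := key3 (prt i) i j hfp.symm hfj (ne_of_gt hlt) (ne_of_lt hij)
      omega
    have h2 : D.card + D.card ≤ p := by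
      have hle : (D ∪ D.image prt).card ≤ p := by
        refine le_trans (Finset.card_le_univ _) ?_
        simp [Finset.card_univ]
      rw [Finset.card_union_of_disjoint hdisj, Finset.card_image_of_injOn hinj] at hle
      exact hle
    omega
  have hpow : D.powerset.card ≤ 2 ^ (p / 2) := by
    rw [Finset.card_powerset]
    exact Nat.pow_le_pow_right (by norm_num) hDcard
  refine le_trans (Finset.card_le_card_of_injOn
    (fun σ => D.filter (fun i => σ i ≠ i)) ?_ ?_) hpow
  · intro σ _
    exact Finset.mem_powerset.mpr (Finset.filter_subset _ _)
  · have hcase2 : ∀ σ τ : Equiv.Perm (Fin p), (∀ i, f (σ i) = f i) → (∀ i, f (τ i) = f i) →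
        D.filter (fun i => σ i ≠ i) = D.filter (fun i => τ i ≠ i) →
        ∀ k, σ k ≠ k → τ k = k → False := by
      intro σ τ hσ' hτ' he k hσk hτk
      have hfk : f (σ k) = f k := hσ' k
      rcases lt_or_gt_of_ne hσk with hlt | hgt
      · -- σ k < k
        have hjD : σ k ∈ D := by
          simp only [hDdef, Finset.mem_filter, Finset.mem_univ, true_and]
          exact ⟨k, hlt, hfk.symm⟩
        have hjk : σ (σ k) ≠ σ k := by
          intro h
          exact hσk (σ.injective h)
        have hσj : σ (σ k) = k :=
          (key3 (σ k) k (σ (σ k)) hfk.symm (hσ' (σ k)) (ne_of_lt hlt) (Ne.symm hjk)).symm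
        have hmemσ : σ k ∈ D.filter (fun i => σ i ≠ i) :=
          Finset.mem_filter.mpr ⟨hjD, hjk⟩
        have hmemτ : σ k ∈ D.filter (fun i => τ i ≠ i) := he ▸ hmemσ
        have hτj : τ (σ k) ≠ σ k := (Finset.mem_filter.mp hmemτ).2
        have hτjk : τ (σ k) = k :=
          (key3 (σ k) k (τ (σ k)) hfk.symm (hτ' (σ k)) (ne_of_lt hlt) (Ne.symm hτj)).symm
        have : σ k = k := τ.injective (by rw [hτjk, hτk])
        exact hσk this
      · -- k < σ k
        have hkD : k ∈ D := by
          simp only [hDdef, Finset.mem_filter, Finset.mem_univ, true_and]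
          exact ⟨σ k, hgt, hfk⟩
        have hmemσ : k ∈ D.filter (fun i => σ i ≠ i) :=
          Finset.mem_filter.mpr ⟨hkD, hσk⟩
        have hmemτ : k ∈ D.filter (fun i => τ i ≠ i) := he ▸ hmemσ
        exact (Finset.mem_filter.mp hmemτ).2 hτk
    intro σ hσ τ hτ he
    have hσ' : ∀ i, f (σ i) = f i := by simpa using hσ
    have hτ' : ∀ i, f (τ i) = f i := by simpa using hτ
    ext k
    by_cases h1 : σ k = k <;> by_cases h2 : τ k = k
    · rw [h1, h2]
    · exact absurd (hcase2 τ σ hτ' hσ' he.symm k h2 h1) (fun h => h)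
    · exact absurd (hcase2 σ τ hσ' hτ' he k h1 h2) (fun h => h)
    · exact congrArg Fin.val (key3 k (σ k) (τ k) (hσ' k) (hτ' k) (Ne.symm h1) (Ne.symm h2))

/-- `#(bar-D*_{l,p})/p! ≤ #(D*_{l,p}) ≤ 2^{p/2} #(bar-D*_{l,p})/p!`. -/
theorem stmt6 (l p : ℕ) (hl : 2 ≤ l) (hp : 2 ≤ p) (hev : Even (p * l)) :
    (Nat.card ↥(barDstar l p) : ℝ) / (Nat.factorial p) ≤ (Nat.card ↥(Dstar l p) : ℝ) ∧
    (Nat.card ↥(Dstar l p) : ℝ) ≤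
      (2 : ℝ) ^ ((p : ℝ) / 2) * (Nat.card ↥(barDstar l p) : ℝ) / (Nat.factorial p) := by
  
  classical
  have hfin : (barDstar l p).Finite := by
    apply Set.Finite.subset
      (Finset.finite_toSet (Fintype.piFinset fun _ : Fin p => (Finset.Icc 1 (p * l / 2)).powerset))
    intro f hf
    obtain ⟨-, -, hsub, -⟩ := hf
    rw [Finset.mem_coe, Fintype.mem_piFinset]
    intro i
    refine Finset.mem_powerset.mpr (hsub (f i) ?_)
    rw [Multiset.mem_coe, List.mem_ofFn]
    exact ⟨i, rfl⟩
  set T : Finset (Fin p → Finset ℕ) := hfin.toFinset with hT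
  have hmemT : ∀ f, f ∈ T ↔ f ∈ barDstar l p := fun f => Set.Finite.mem_toFinset hfin
  set piF : (Fin p → Finset ℕ) → Multiset (Finset ℕ) := fun f => ↑(List.ofFn f) with hpiF
  set S : Finset (Multiset (Finset ℕ)) := T.image piF with hS
  have hgetofn : ∀ (L : List (Finset ℕ)) (h : L.length = p),
      List.ofFn (fun i => L.get (Fin.cast h.symm i)) = L := by
    intro L h
    subst h
    simp [List.ofFn_get]
  have hSst : ↑S = Dstar l p := by
    ext C
    simp only [hS, Finset.coe_image, Set.mem_image, Finset.mem_coe]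
    constructor
    · rintro ⟨f, hfT, rfl⟩
      exact (hmemT f).mp hfT
    · intro hC
      have hlen : C.toList.length = p := by
        rw [Multiset.length_toList, hC.1]
      have hofn : piF (fun i => C.toList.get (Fin.cast hlen.symm i)) = C := by
        show (↑(List.ofFn fun i => C.toList.get (Fin.cast hlen.symm i)) : Multiset (Finset ℕ)) = C
        rw [hgetofn C.toList hlen, Multiset.coe_toList]
      refine ⟨fun i => C.toList.get (Fin.cast hlen.symm i), ?_, hofn⟩
      rw [hmemT]
      show piF (fun i => C.toList.get (Fin.cast hlen.symm i)) ∈ Dstar l p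
      rw [hofn]
      exact hC
  have hcardbar : Nat.card ↥(barDstar l p) = T.card := by
    rw [Nat.card_coe_set_eq, Set.ncard_eq_toFinset_card _ hfin]
  have hcardD : Nat.card ↥(Dstar l p) = S.card := by
    rw [← hSst, Nat.card_coe_set_eq, Set.ncard_coe_finset]
  have hfiber : T.card = ∑ C ∈ S, (T.filter (fun f => piF f = C)).card :=
    Finset.card_eq_sum_card_fiberwise (fun f hf => Finset.mem_image_of_mem piF hf)
  have hC1 : ∀ C ∈ S, (T.filter (fun f => piF f = C)).card ≤ p.factorial := by
    intro C hC
    obtain ⟨g, hgT, hgC⟩ := Finset.mem_image.mp hC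
    have h1 : (T.filter (fun f => piF f = C)).card ≤ (List.ofFn g).permutations.toFinset.card := by
      apply Finset.card_le_card_of_injOn (fun f => List.ofFn f)
      · intro f hf
        rw [Finset.mem_coe, List.mem_toFinset, List.mem_permutations]
        have : piF f = piF g := by rw [(Finset.mem_filter.mp hf).2, ← hgC]
        exact Multiset.coe_eq_coe.mp this
      · intro f₁ _ f₂ _ h
        exact List.ofFn_injective h
    refine le_trans h1 (le_trans (List.toFinset_card_le _) ?_)
    rw [List.length_permutations, List.length_ofFn]
  have hC2 : ∀ C ∈ S, p.factorial ≤ 2 ^ (p / 2) * (T.filter (fun f => piF f = C)).card := by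
    intro C hC
    obtain ⟨g, hgT, hgC⟩ := Finset.mem_image.mp hC
    have hperm : (Finset.univ : Finset (Equiv.Perm (Fin p))).card = p.factorial := by
      rw [Finset.card_univ, Fintype.card_perm, Fintype.card_fin]
    have hmaps : ∀ σ : Equiv.Perm (Fin p),
        (fun i => g (σ i)) ∈ T.filter (fun f => piF f = C) := by
      intro σ
      have hpi : piF (fun i => g (σ i)) = piF g :=
        Multiset.coe_eq_coe.mpr (σ.ofFn_comp_perm g)
      refine Finset.mem_filter.mpr ⟨?_, by rw [hpi, hgC]⟩
      rw [hmemT]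
      show piF (fun i => g (σ i)) ∈ Dstar l p
      rw [hpi]
      exact (hmemT g).mp hgT
    have hsum : (Finset.univ : Finset (Equiv.Perm (Fin p))).card
        = ∑ f ∈ T.filter (fun f => piF f = C),
            (Finset.univ.filter (fun σ : Equiv.Perm (Fin p) => (fun i => g (σ i)) = f)).card :=
      Finset.card_eq_sum_card_fiberwise (fun σ _ => hmaps σ)
    have hfib : ∀ f ∈ T.filter (fun f => piF f = C),
        (Finset.univ.filter (fun σ : Equiv.Perm (Fin p) => (fun i => g (σ i)) = f)).card
          ≤ 2 ^ (p / 2) := by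
      intro f hf
      rcases Finset.eq_empty_or_nonempty
          (Finset.univ.filter (fun σ : Equiv.Perm (Fin p) => (fun i => g (σ i)) = f)) with
        he | ⟨σ₀, hσ₀⟩
      · rw [he, Finset.card_empty]
        exact Nat.zero_le _
      · have hg0 : ∀ i, g (σ₀ i) = f i := fun i =>
          congrFun (Finset.mem_filter.mp hσ₀).2 i
        have hfbar : f ∈ barDstar l p := (hmemT f).mp (Finset.mem_filter.mp hf).1
        refine le_trans (Finset.card_le_card_of_injOn (fun σ => σ₀⁻¹ * σ) ?_ ?_)
          (stab_card_le hfbar)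
        · intro σ hσ
          have hgs : ∀ i, g (σ i) = f i := fun i =>
            congrFun (Finset.mem_filter.mp hσ).2 i
          simp only [Finset.mem_coe, Finset.mem_filter, Finset.mem_univ, true_and]
          intro i
          rw [Equiv.Perm.mul_apply, ← hg0 ((σ₀⁻¹) (σ i)), ← Equiv.Perm.mul_apply, mul_inv_cancel, Equiv.Perm.one_apply]
          exact hgs i
        · intro a _ b _ h
          exact mul_left_cancel h
    calc p.factorial = (Finset.univ : Finset (Equiv.Perm (Fin p))).card := hperm.symm
      _ = ∑ f ∈ T.filter (fun f => piF f = C),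
            (Finset.univ.filter (fun σ : Equiv.Perm (Fin p) => (fun i => g (σ i)) = f)).card :=
          hsum
      _ ≤ ∑ _f ∈ T.filter (fun f => piF f = C), 2 ^ (p / 2) := Finset.sum_le_sum hfib
      _ = (T.filter (fun f => piF f = C)).card * 2 ^ (p / 2) := by
          rw [Finset.sum_const, smul_eq_mul]
      _ = 2 ^ (p / 2) * (T.filter (fun f => piF f = C)).card := mul_comm _ _
  have hup : T.card ≤ S.card * p.factorial := by
    rw [hfiber]
    calc ∑ C ∈ S, (T.filter (fun f => piF f = C)).card
        ≤ ∑ _C ∈ S, p.factorial := Finset.sum_le_sum hC1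
      _ = S.card * p.factorial := by rw [Finset.sum_const, smul_eq_mul]
  have hdown : S.card * p.factorial ≤ 2 ^ (p / 2) * T.card := by
    calc S.card * p.factorial = ∑ _C ∈ S, p.factorial := by
          rw [Finset.sum_const, smul_eq_mul]
      _ ≤ ∑ C ∈ S, 2 ^ (p / 2) * (T.filter (fun f => piF f = C)).card :=
          Finset.sum_le_sum hC2
      _ = 2 ^ (p / 2) * ∑ C ∈ S, (T.filter (fun f => piF f = C)).card := by
          rw [Finset.mul_sum]
      _ = 2 ^ (p / 2) * T.card := by rw [← hfiber]
  have hfac : (0:ℝ) < (p.factorial : ℝ) := by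
    exact_mod_cast Nat.factorial_pos p
  rw [hcardbar, hcardD]
  constructor
  · rw [div_le_iff₀ hfac]
    exact_mod_cast hup
  · rw [le_div_iff₀ hfac]
    calc (S.card : ℝ) * (p.factorial : ℝ) ≤ ((2 ^ (p / 2) * T.card : ℕ) : ℝ) := by
          exact_mod_cast hdown
      _ = (2:ℝ) ^ ((p / 2 : ℕ)) * (T.card : ℝ) := by push_cast; ring
      _ ≤ (2:ℝ) ^ ((p:ℝ)/2) * (T.card : ℝ) := by
          apply mul_le_mul_of_nonneg_right _ (by positivity)
          rw [← Real.rpow_natCast 2 (p/2)]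
          apply Real.rpow_le_rpow_of_exponent_le one_le_two
          calc ((p/2 : ℕ) : ℝ) ≤ (p:ℝ)/((2:ℕ):ℝ) := Nat.cast_div_le
            _ = (p:ℝ)/2 := by norm_num
end

section
/- Let p, l ≥ 2 and 1 ≤ r ≤ p be integers with pl even, and let A ∈ D_{l,p}. Then there are at most p sub-collections of A that can be enumerated as an X-chain of length r, and at most p sub-collections of A that can be enumerated as a Y-chain of length r. -/
/-- `D` is a sub-collection of `C` that can be enumerated as an X-chain of
length `r` (for the parameter `l`). -/
def IsXChain (l r : ℕ) (C D : Multiset (Finset ℕ)) : Prop :=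
  D ≤ C ∧ Multiset.card D = r ∧ Even r ∧
    ∃ f : Fin r → Finset ℕ, (↑(List.ofFn f) : Multiset (Finset ℕ)) = D ∧
      ∀ (i : ℕ) (h : i + 1 < r),
        (f ⟨i, Nat.lt_of_succ_lt h⟩ ∩ f ⟨i + 1, h⟩).card =
          if Even i then l - 1 else 1

/-- `D` is a sub-collection of `C` that can be enumerated as a Y-chain of
length `r` (for the parameter `l`): for even `l` consecutive intersections have
`l/2` elements, while for odd `l` the Y-chains are exactly the single-member
sub-collections. -/
def IsYChain (l r : ℕ) (C D : Multiset (Finset ℕ)) : Prop :=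
  D ≤ C ∧ Multiset.card D = r ∧
    if Even l then
      ∃ f : Fin r → Finset ℕ, (↑(List.ofFn f) : Multiset (Finset ℕ)) = D ∧
        ∀ (i : ℕ) (h : i + 1 < r),
          (f ⟨i, Nat.lt_of_succ_lt h⟩ ∩ f ⟨i + 1, h⟩).card = l / 2
    else r = 1


private lemma aux_countP_mul_le {α : Type*} (f : α → ℕ) (v : ℕ)
    (p : α → Prop) [DecidablePred p] (hp : ∀ B, p B → f B = v) (M : Multiset α) :
    M.countP p * v ≤ (M.map f).sum := by
  induction M using Multiset.induction_on with
  | empty => simp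
  | cons B M ih =>
    rw [Multiset.countP_cons, Multiset.map_cons, Multiset.sum_cons]
    by_cases h : p B
    · simp only [h, if_true]
      rw [add_mul, one_mul, hp B h]
      omega
    · simp only [h, if_false]
      rw [add_zero]
      omega

private lemma aux_sum_inter (A : Finset ℕ) (M : Multiset (Finset ℕ)) :
    (M.map fun B => (A ∩ B).card).sum = ∑ a ∈ A, M.countP (fun B => a ∈ B) := by
  induction M using Multiset.induction_on with
  | empty => simp
  | cons B M ih =>
    rw [Multiset.map_cons, Multiset.sum_cons, ih]
    have h2 : A ∩ B = A.filter (fun a => a ∈ B) := by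
      ext x; simp [Finset.mem_inter, Finset.mem_filter]
    rw [h2, Finset.card_filter, ← Finset.sum_add_distrib]
    refine Finset.sum_congr rfl fun a _ => ?_
    rw [Multiset.countP_cons]
    split_ifs <;> omega

private lemma aux_sum_eq (C : Multiset (Finset ℕ)) (hdc : IsDoubleCover C)
    (A : Finset ℕ) (hA : A ∈ C) :
    ((C.erase A).map fun B => (A ∩ B).card).sum = A.card := by
  rw [aux_sum_inter]
  have h1 : ∀ a ∈ A, (C.erase A).countP (fun B => a ∈ B) = 1 := by
    intro a ha
    have hmem : a ∈ unionC C := by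
      have hle : A ≤ C.sup := Multiset.le_sup hA
      exact hle ha
    have h2 := hdc a hmem
    have hCeq : C = A ::ₘ C.erase A := (Multiset.cons_erase hA).symm
    rw [hCeq, Multiset.countP_cons] at h2
    simp only [ha, if_true] at h2
    omega
  rw [Finset.sum_congr rfl h1]
  simp

private lemma aux_nodup (C : Multiset (Finset ℕ)) (hdc : IsDoubleCover C)
    (l r : ℕ) (hl2 : 2 ≤ l) (hlc : ∀ A ∈ C, A.card = l) (hr2 : 2 ≤ r)
    (w : ℕ → ℕ) (hw1 : ∀ i, 1 ≤ w i) (hwl : ∀ i, w i < l)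
    (f : Fin r → Finset ℕ) (hsub : (↑(List.ofFn f) : Multiset (Finset ℕ)) ≤ C)
    (hchain : ∀ (i : ℕ) (h : i + 1 < r),
      (f ⟨i, Nat.lt_of_succ_lt h⟩ ∩ f ⟨i + 1, h⟩).card = w i) :
    Function.Injective f := by
  by_contra hinj
  rw [← List.nodup_ofFn, ← Multiset.coe_nodup, Multiset.nodup_iff_count_le_one] at hinj
  push_neg at hinj
  obtain ⟨A, hA2⟩ := hinj
  have hAC2 : 2 ≤ C.count A := le_trans (by omega) (Multiset.count_le_of_le A hsub)
  have hAmem : A ∈ (↑(List.ofFn f) : Multiset (Finset ℕ)) := by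
    rw [← Multiset.count_pos]; omega
  obtain ⟨k, hk⟩ : ∃ k, f k = A := by
    rw [Multiset.mem_coe, List.mem_ofFn] at hAmem; exact hAmem
  have hAC : A ∈ C := by rw [← Multiset.count_pos]; omega
  have hAe : A ∈ C.erase A := by
    rw [← Multiset.count_pos, Multiset.count_erase_self]; omega
  have hCeq : C = A ::ₘ A ::ₘ (C.erase A).erase A := by
    rw [Multiset.cons_erase hAe, Multiset.cons_erase hAC]
  have hnb : ∃ (B : Finset ℕ) (b : ℕ),
      B ∈ (↑(List.ofFn f) : Multiset (Finset ℕ)) ∧ B ≠ A ∧ b ∈ A ∧ b ∈ B := by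
    rcases lt_or_ge (k.1 + 1) r with h | h
    · have hcard := hchain k.1 h
      have hfk : f ⟨k.1, Nat.lt_of_succ_lt h⟩ = A := by rw [← hk]
      rw [hfk] at hcard
      have hBA : f ⟨k.1 + 1, h⟩ ≠ A := by
        intro hEq
        rw [hEq, Finset.inter_self] at hcard
        have := hlc A hAC
        have := hwl k.1
        omega
      have hne : (A ∩ f ⟨k.1 + 1, h⟩).Nonempty := by
        rw [← Finset.card_pos, hcard]; exact hw1 k.1
      obtain ⟨b, hb⟩ := hne
      exact ⟨f ⟨k.1 + 1, h⟩, b,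
        by rw [Multiset.mem_coe, List.mem_ofFn]; exact ⟨_, rfl⟩, hBA,
        (Finset.mem_inter.mp hb).1, (Finset.mem_inter.mp hb).2⟩
    · have hk1 : 1 ≤ k.1 := by have := k.2; omega
      have h' : (k.1 - 1) + 1 < r := by have := k.2; omega
      have hcard := hchain (k.1 - 1) h'
      have hfk : f ⟨k.1 - 1 + 1, h'⟩ = A := by
        rw [← hk]; congr 1; exact Fin.ext (by simp; omega)
      rw [hfk] at hcard
      have hBA : f ⟨k.1 - 1, Nat.lt_of_succ_lt h'⟩ ≠ A := by
        intro hEq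
        rw [hEq, Finset.inter_self] at hcard
        have := hlc A hAC
        have := hwl (k.1 - 1)
        omega
      have hne : (f ⟨k.1 - 1, Nat.lt_of_succ_lt h'⟩ ∩ A).Nonempty := by
        rw [← Finset.card_pos, hcard]; exact hw1 (k.1 - 1)
      obtain ⟨b, hb⟩ := hne
      exact ⟨f ⟨k.1 - 1, Nat.lt_of_succ_lt h'⟩, b,
        by rw [Multiset.mem_coe, List.mem_ofFn]; exact ⟨_, rfl⟩, hBA,
        (Finset.mem_inter.mp hb).2, (Finset.mem_inter.mp hb).1⟩
  obtain ⟨B, b, hBmem, hBA, hbA, hbB⟩ := hnb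
  have hBC : B ∈ C := Multiset.mem_of_le hsub hBmem
  have hBC'' : B ∈ (C.erase A).erase A := by
    rw [Multiset.mem_erase_of_ne hBA, Multiset.mem_erase_of_ne hBA]
    exact hBC
  have hbU : b ∈ unionC C := by
    have hle : A ≤ C.sup := Multiset.le_sup hAC
    exact hle hbA
  have h2 := hdc b hbU
  rw [hCeq, Multiset.countP_cons, Multiset.countP_cons] at h2
  simp only [hbA, if_true] at h2
  have hpos : 0 < Multiset.countP (fun X => b ∈ X) ((C.erase A).erase A) := by
    rw [Multiset.countP_pos]; exact ⟨B, hBC'', hbB⟩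
  omega

private lemma aux_det (C : Multiset (Finset ℕ)) (hdc : IsDoubleCover C)
    (l r : ℕ) (hlc : ∀ A ∈ C, A.card = l) (hr2 : 2 ≤ r)
    (w : ℕ → ℕ) (hw1 : ∀ i, 1 ≤ w i) (hsum : ∀ i, w i + w (i + 1) = l)
    (f g : Fin r → Finset ℕ)
    (hfsub : (↑(List.ofFn f) : Multiset (Finset ℕ)) ≤ C)
    (hgsub : (↑(List.ofFn g) : Multiset (Finset ℕ)) ≤ C)
    (hfc : ∀ (i : ℕ) (h : i + 1 < r),
      (f ⟨i, Nat.lt_of_succ_lt h⟩ ∩ f ⟨i + 1, h⟩).card = w i)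
    (hgc : ∀ (i : ℕ) (h : i + 1 < r),
      (g ⟨i, Nat.lt_of_succ_lt h⟩ ∩ g ⟨i + 1, h⟩).card = w i)
    (hfi : Function.Injective f) (hgi : Function.Injective g)
    (h0 : f ⟨0, by omega⟩ = g ⟨0, by omega⟩)
    (h1 : f ⟨1, by omega⟩ = g ⟨1, by omega⟩) :
    ∀ (k : ℕ) (hk : k < r), f ⟨k, hk⟩ = g ⟨k, hk⟩ := by
  have hmemf : ∀ i : Fin r, f i ∈ C := fun i =>
    Multiset.mem_of_le hfsub (by rw [Multiset.mem_coe, List.mem_ofFn]; exact ⟨i, rfl⟩)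
  have hmemg : ∀ i : Fin r, g i ∈ C := fun i =>
    Multiset.mem_of_le hgsub (by rw [Multiset.mem_coe, List.mem_ofFn]; exact ⟨i, rfl⟩)
  intro k
  induction k using Nat.strong_induction_on with
  | _ k IH =>
    intro hk
    match k, hk with
    | 0, hk => exact h0
    | 1, hk => exact h1
    | (m+2), hk =>
      have hm1 : m + 1 < r := by omega
      have hm : m < r := by omega
      have hA := IH (m+1) (by omega) hm1
      have hP := IH m (by omega) hm
      have hAC : f ⟨m+1, hm1⟩ ∈ C := hmemf _
      have hPA : f ⟨m, hm⟩ ≠ f ⟨m+1, hm1⟩ := by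
        intro hEq
        have h' := hfi hEq
        rw [Fin.mk.injEq] at h'
        omega
      have hPM : f ⟨m, hm⟩ ∈ C.erase (f ⟨m+1, hm1⟩) :=
        (Multiset.mem_erase_of_ne hPA).mpr (hmemf _)
      have hsumM : ((C.erase (f ⟨m+1, hm1⟩)).map
          fun B => (f ⟨m+1, hm1⟩ ∩ B).card).sum = l := by
        rw [aux_sum_eq C hdc _ hAC, hlc _ hAC]
      have hMeq : C.erase (f ⟨m+1, hm1⟩) =
          f ⟨m, hm⟩ ::ₘ (C.erase (f ⟨m+1, hm1⟩)).erase (f ⟨m, hm⟩) :=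
        (Multiset.cons_erase hPM).symm
      rw [hMeq, Multiset.map_cons, Multiset.sum_cons] at hsumM
      have hAP : (f ⟨m+1, hm1⟩ ∩ f ⟨m, hm⟩).card = w m := by
        rw [Finset.inter_comm]; exact hfc m hm1
      set M' := (C.erase (f ⟨m+1, hm1⟩)).erase (f ⟨m, hm⟩) with hM'
      have hsM' : (M'.map fun B => (f ⟨m+1, hm1⟩ ∩ B).card).sum = w (m+1) := by
        have := hsum m
        omega
      have hX1 : (f ⟨m+1, hm1⟩ ∩ f ⟨m+2, hk⟩).card = w (m+1) := hfc (m+1) hk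
      have hX2 : (f ⟨m+1, hm1⟩ ∩ g ⟨m+2, hk⟩).card = w (m+1) := by
        rw [hA, hP] at *
        exact hgc (m+1) hk
      have hX1M : f ⟨m+2, hk⟩ ∈ M' := by
        rw [hM', Multiset.mem_erase_of_ne, Multiset.mem_erase_of_ne]
        · exact hmemf _
        · intro hEq; have h' := hfi hEq; rw [Fin.mk.injEq] at h'; omega
        · intro hEq; have h' := hfi hEq; rw [Fin.mk.injEq] at h'; omega
      have hX2M : g ⟨m+2, hk⟩ ∈ M' := by
        rw [hM', hA, hP, Multiset.mem_erase_of_ne, Multiset.mem_erase_of_ne]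
        · exact hmemg _
        · intro hEq; have h' := hgi hEq; rw [Fin.mk.injEq] at h'; omega
        · intro hEq; have h' := hgi hEq; rw [Fin.mk.injEq] at h'; omega
      by_contra hne
      have hcnt : 2 ≤ M'.countP (fun B => (f ⟨m+1, hm1⟩ ∩ B).card = w (m+1)) := by
        have hsubs : ({f ⟨m+2, hk⟩, g ⟨m+2, hk⟩} : Finset (Finset ℕ)) ⊆
            (M'.filter fun B => (f ⟨m+1, hm1⟩ ∩ B).card = w (m+1)).toFinset := by
          intro x hx
          rw [Finset.mem_insert, Finset.mem_singleton] at hx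
          rw [Multiset.mem_toFinset, Multiset.mem_filter]
          rcases hx with rfl | rfl
          · exact ⟨hX1M, hX1⟩
          · exact ⟨hX2M, hX2⟩
        calc 2 = ({f ⟨m+2, hk⟩, g ⟨m+2, hk⟩} : Finset (Finset ℕ)).card :=
              (Finset.card_pair hne).symm
          _ ≤ (M'.filter fun B => (f ⟨m+1, hm1⟩ ∩ B).card = w (m+1)).toFinset.card :=
              Finset.card_le_card hsubs
          _ ≤ Multiset.card (M'.filter fun B => (f ⟨m+1, hm1⟩ ∩ B).card = w (m+1)) :=
              Multiset.toFinset_card_le _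
          _ = M'.countP (fun B => (f ⟨m+1, hm1⟩ ∩ B).card = w (m+1)) :=
              (Multiset.countP_eq_card_filter _ _).symm
      have hb := aux_countP_mul_le (fun B => (f ⟨m+1, hm1⟩ ∩ B).card) (w (m+1))
        (fun B => (f ⟨m+1, hm1⟩ ∩ B).card = w (m+1)) (fun B hB => hB) M'
      rw [hsM'] at hb
      have hmul := Nat.mul_le_mul_right (w (m+1)) hcnt
      have := hw1 (m+1)
      omega

private lemma aux_rev (r : ℕ) (hr2 : 2 ≤ r) (w : ℕ → ℕ)
    (hrev : ∀ i, i + 1 < r → w (r - 2 - i) = w i)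
    (f : Fin r → Finset ℕ)
    (hfc : ∀ (i : ℕ) (h : i + 1 < r),
      (f ⟨i, Nat.lt_of_succ_lt h⟩ ∩ f ⟨i + 1, h⟩).card = w i) :
    ((↑(List.ofFn (fun i : Fin r => f i.rev)) : Multiset (Finset ℕ)) =
      (↑(List.ofFn f) : Multiset (Finset ℕ))) ∧
    ∀ (i : ℕ) (h : i + 1 < r),
      ((fun i : Fin r => f i.rev) ⟨i, Nat.lt_of_succ_lt h⟩ ∩
        (fun i : Fin r => f i.rev) ⟨i + 1, h⟩).card = w i := by
  constructor
  · rw [Multiset.coe_eq_coe]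
    exact Equiv.Perm.ofFn_comp_perm Fin.revPerm f
  · intro i h
    simp only
    have h2 : (r - 2 - i) + 1 < r := by omega
    have e1 : (⟨i, Nat.lt_of_succ_lt h⟩ : Fin r).rev = ⟨(r - 2 - i) + 1, h2⟩ := by
      apply Fin.ext
      simp [Fin.rev]
      omega
    have e2 : (⟨i + 1, h⟩ : Fin r).rev = ⟨r - 2 - i, Nat.lt_of_succ_lt h2⟩ := by
      apply Fin.ext
      simp [Fin.rev]
      omega
    rw [e1, e2, Finset.inter_comm]
    rw [hfc (r - 2 - i) h2]
    exact hrev i h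

private lemma aux_master (C : Multiset (Finset ℕ)) (l p r : ℕ)
    (hdc : IsDoubleCover C) (hcp : Multiset.card C = p)
    (hlc : ∀ A ∈ C, A.card = l) (hl2 : 2 ≤ l) (hr2 : 2 ≤ r)
    (w : ℕ → ℕ) (hw1 : ∀ i, 1 ≤ w i) (hsum : ∀ i, w i + w (i + 1) = l)
    (hrev : ∀ i, i + 1 < r → w (r - 2 - i) = w i) (h3 : l < 3 * w 0)
    (S : Set (Multiset (Finset ℕ)))
    (hS : ∀ D ∈ S, D ≤ C ∧ ∃ f : Fin r → Finset ℕ,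
      (↑(List.ofFn f) : Multiset (Finset ℕ)) = D ∧
      ∀ (i : ℕ) (h : i + 1 < r),
        (f ⟨i, Nat.lt_of_succ_lt h⟩ ∩ f ⟨i + 1, h⟩).card = w i) :
    Nat.card S ≤ p := by
  classical
  have hwl : ∀ i, w i < l := fun i => by have := hsum i; have := hw1 (i+1); omega
  set E : Finset (Finset ℕ × Finset ℕ) := C.toFinset.biUnion (fun A =>
    (((C.erase A).filter fun B => (A ∩ B).card = w 0).toFinset).image
      fun B => (A, B)) with hE
  have hEcard : E.card ≤ 2 * p := by
    rw [hE]
    refine le_trans Finset.card_biUnion_le ?_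
    have hper : ∀ A ∈ C.toFinset,
        ((((C.erase A).filter fun B => (A ∩ B).card = w 0).toFinset).image
          fun B => (A, B)).card ≤ 2 := by
      intro A hA
      rw [Multiset.mem_toFinset] at hA
      refine le_trans Finset.card_image_le (le_trans (Multiset.toFinset_card_le _) ?_)
      have hcc : Multiset.card ((C.erase A).filter fun B => (A ∩ B).card = w 0) =
          (C.erase A).countP fun B => (A ∩ B).card = w 0 :=
        (Multiset.countP_eq_card_filter _ _).symm
      rw [hcc]
      have hb := aux_countP_mul_le (fun B => (A ∩ B).card) (w 0)
        (fun B => (A ∩ B).card = w 0) (fun B hB => hB) (C.erase A)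
      have hs : ((C.erase A).map fun B => (A ∩ B).card).sum = l := by
        rw [aux_sum_eq C hdc A hA, hlc A hA]
      rw [hs] at hb
      by_contra hgt
      push_neg at hgt
      have h3le := Nat.mul_le_mul_right (w 0) hgt
      omega
    calc ∑ A ∈ C.toFinset, ((((C.erase A).filter fun B => (A ∩ B).card = w 0).toFinset).image
          fun B => (A, B)).card ≤ ∑ _A ∈ C.toFinset, 2 := Finset.sum_le_sum hper
      _ = 2 * C.toFinset.card := by rw [Finset.sum_const, smul_eq_mul, mul_comm]
      _ ≤ 2 * p := by
          have := Multiset.toFinset_card_le C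
          omega
  choose hsub f hf1 hf2 using hS
  have hwltop : ∀ i, w i < l := hwl
  have inj_of : ∀ (e : Fin r → Finset ℕ),
      (↑(List.ofFn e) : Multiset (Finset ℕ)) ≤ C →
      (∀ (i : ℕ) (h : i + 1 < r),
        (e ⟨i, Nat.lt_of_succ_lt h⟩ ∩ e ⟨i + 1, h⟩).card = w i) →
      Function.Injective e :=
    fun e h1 h2 => aux_nodup C hdc l r hl2 hlc hr2 w hw1 hwl e h1 h2
  have key : ∀ (e : Fin r → Finset ℕ),
      (↑(List.ofFn e) : Multiset (Finset ℕ)) ≤ C →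
      (∀ (i : ℕ) (h : i + 1 < r),
        (e ⟨i, Nat.lt_of_succ_lt h⟩ ∩ e ⟨i + 1, h⟩).card = w i) →
      (e ⟨0, by omega⟩, e ⟨1, by omega⟩) ∈ E := by
    intro e h1 h2
    have hinj := inj_of e h1 h2
    have h01 : (0 : ℕ) + 1 < r := by omega
    have hAB : (e ⟨0, by omega⟩ ∩ e ⟨1, by omega⟩).card = w 0 := h2 0 h01
    have hAC : e ⟨0, by omega⟩ ∈ C :=
      Multiset.mem_of_le h1 (by rw [Multiset.mem_coe, List.mem_ofFn]; exact ⟨_, rfl⟩)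
    have hBC : e ⟨1, by omega⟩ ∈ C :=
      Multiset.mem_of_le h1 (by rw [Multiset.mem_coe, List.mem_ofFn]; exact ⟨_, rfl⟩)
    have hBA : e ⟨1, by omega⟩ ≠ e ⟨0, by omega⟩ := by
      intro hEq; have h' := hinj hEq; rw [Fin.mk.injEq] at h'; omega
    rw [hE, Finset.mem_biUnion]
    refine ⟨e ⟨0, by omega⟩, Multiset.mem_toFinset.mpr hAC, ?_⟩
    rw [Finset.mem_image]
    refine ⟨e ⟨1, by omega⟩, ?_, rfl⟩
    rw [Multiset.mem_toFinset, Multiset.mem_filter]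
    exact ⟨(Multiset.mem_erase_of_ne hBA).mpr hBC, hAB⟩
  -- the pair function
  set pr : ↥S × Bool → Finset ℕ × Finset ℕ := fun x =>
    if x.2 then (f x.1.1 x.1.2 ⟨0, by omega⟩, f x.1.1 x.1.2 ⟨1, by omega⟩)
    else (f x.1.1 x.1.2 ⟨r - 1, by omega⟩, f x.1.1 x.1.2 ⟨r - 2, by omega⟩) with hpr
  have enum : ∀ (s : ↥S) (b : Bool), ∃ e : Fin r → Finset ℕ,
      (↑(List.ofFn e) : Multiset (Finset ℕ)) = s.1 ∧
      (∀ (i : ℕ) (h : i + 1 < r),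
        (e ⟨i, Nat.lt_of_succ_lt h⟩ ∩ e ⟨i + 1, h⟩).card = w i) ∧
      pr (s, b) = (e ⟨0, by omega⟩, e ⟨1, by omega⟩) := by
    intro s b
    cases b with
    | true =>
      exact ⟨f s.1 s.2, hf1 s.1 s.2, hf2 s.1 s.2, by simp [hpr]⟩
    | false =>
      obtain ⟨hr1, hr2'⟩ := aux_rev r hr2 w hrev (f s.1 s.2) (hf2 s.1 s.2)
      refine ⟨fun i : Fin r => f s.1 s.2 i.rev, by rw [hr1]; exact hf1 s.1 s.2, hr2', ?_⟩
      have e1 : ((⟨0, by omega⟩ : Fin r)).rev = (⟨r - 1, by omega⟩ : Fin r) := by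
        apply Fin.ext; simp [Fin.rev]
      have e2 : ((⟨1, by omega⟩ : Fin r)).rev = (⟨r - 2, by omega⟩ : Fin r) := by
        apply Fin.ext; simp [Fin.rev]
      simp only [hpr, Bool.false_eq_true, if_false]
      rw [e1, e2]
  have hmemE : ∀ x : ↥S × Bool, pr x ∈ E := by
    intro ⟨s, b⟩
    obtain ⟨e, he1, he2, he3⟩ := enum s b
    rw [he3]
    exact key e (by rw [he1]; exact hsub s.1 s.2) he2
  set ι : ↥S × Bool → ↥E := fun x => ⟨pr x, hmemE x⟩ with hι
  have hinjι : Function.Injective ι := by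
    rintro ⟨s, b⟩ ⟨t, c⟩ h
    have hpair : pr (s, b) = pr (t, c) := congrArg Subtype.val h
    obtain ⟨ex, hex1, hex2, hex3⟩ := enum s b
    obtain ⟨ey, hey1, hey2, hey3⟩ := enum t c
    have hpair2 := hpair
    rw [hex3, hey3] at hpair2
    have h0 : ex ⟨0, by omega⟩ = ey ⟨0, by omega⟩ := congrArg Prod.fst hpair2
    have h1 : ex ⟨1, by omega⟩ = ey ⟨1, by omega⟩ := congrArg Prod.snd hpair2
    have hexle : (↑(List.ofFn ex) : Multiset (Finset ℕ)) ≤ C := by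
      rw [hex1]; exact hsub s.1 s.2
    have heyle : (↑(List.ofFn ey) : Multiset (Finset ℕ)) ≤ C := by
      rw [hey1]; exact hsub t.1 t.2
    have hdet := aux_det C hdc l r hlc hr2 w hw1 hsum ex ey hexle heyle hex2 hey2
      (inj_of ex hexle hex2) (inj_of ey heyle hey2) h0 h1
    have hfun : ex = ey := funext fun k => hdet k.1 k.2
    have hst : s = t := Subtype.ext (by rw [← hex1, ← hey1, hfun])
    subst hst
    have hbc : b = c := by
      by_contra hbc
      have hfinj : Function.Injective (f s.1 s.2) :=
        inj_of (f s.1 s.2) (by rw [hf1 s.1 s.2]; exact hsub s.1 s.2) (hf2 s.1 s.2)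
      have hne : f s.1 s.2 ⟨0, by omega⟩ ≠ f s.1 s.2 ⟨r - 1, by omega⟩ := by
        intro hEq; have h' := hfinj hEq; rw [Fin.mk.injEq] at h'; omega
      cases b <;> cases c
      · exact hbc rfl
      · have := congrArg Prod.fst hpair
        simp [hpr] at this
        exact hne this.symm
      · have := congrArg Prod.fst hpair
        simp [hpr] at this
        exact hne this
      · exact hbc rfl
    rw [hbc]
  have hcard := Nat.card_le_card_of_injective ι hinjι
  rw [Nat.card_prod, Nat.card_eq_finsetCard] at hcard
  have hbool : Nat.card Bool = 2 := by simp
  rw [hbool] at hcard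
  omega

private lemma aux_single (C : Multiset (Finset ℕ)) (p : ℕ) (hcp : Multiset.card C = p)
    (S : Set (Multiset (Finset ℕ))) (hS : ∀ D ∈ S, D ≤ C ∧ Multiset.card D = 1) :
    Nat.card S ≤ p := by
  classical
  have h1 : ∀ D : ↥S, ∃ a : Finset ℕ, D.1 = {a} :=
    fun D => Multiset.card_eq_one.mp (hS D.1 D.2).2
  choose a ha using h1
  have hmem : ∀ D : ↥S, a D ∈ C.toFinset := by
    intro D
    have hle := (hS D.1 D.2).1
    rw [ha D] at hle
    rw [Multiset.mem_toFinset]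
    exact Multiset.mem_of_le hle (Multiset.mem_singleton_self _)
  have hinj : Function.Injective (fun D : ↥S => (⟨a D, hmem D⟩ : ↥C.toFinset)) := by
    intro D D' h
    rw [Subtype.mk.injEq] at h
    exact Subtype.ext (by rw [ha D, ha D', h])
  have hcard := Nat.card_le_card_of_injective _ hinj
  rw [Nat.card_eq_finsetCard] at hcard
  have := Multiset.toFinset_card_le C
  omega

/-- a double-covering `A ∈ D_{l,p}` contains at most `p`
sub-collections that are X-chains of length `r`, and at most `p`
sub-collections that are Y-chains of length `r`. -/

theorem stmt9 (l p r : ℕ) (hl : 2 ≤ l) (hp : 2 ≤ p) (hr : 1 ≤ r) (hrp : r ≤ p)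
    (hev : Even (p * l)) (C : Multiset (Finset ℕ)) (hC : C ∈ Dfull l p) :
    Nat.card {D : Multiset (Finset ℕ) | IsXChain l r C D} ≤ p ∧
    Nat.card {D : Multiset (Finset ℕ) | IsYChain l r C D} ≤ p := by
  obtain ⟨hcp, hdc, -, hlc⟩ := hC
  constructor
  · by_cases her : Even r
    · have hr2 : 2 ≤ r := by
        rcases her with ⟨k, hk⟩; omega
      refine aux_master C l p r hdc hcp hlc hl hr2
        (fun i => if Even i then l - 1 else 1) (fun i => ?_) (fun i => ?_)
        (fun i hir => ?_) ?_ _ (fun D hD => ?_)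
      · split <;> omega
      · by_cases hi : Even i
        · rw [if_pos hi, if_neg (by simp [Nat.even_add_one, hi])]; omega
        · rw [if_neg hi, if_pos (Nat.even_add_one.mpr hi)]; omega
      · have hpar : Even (r - 2 - i) ↔ Even i := by
          simp only [Nat.even_iff] at her ⊢
          omega
        exact if_congr hpar rfl rfl
      · rw [if_pos Even.zero]; omega
      · obtain ⟨h1, -, -, f, hf1, hf2⟩ := hD
        exact ⟨h1, f, hf1, hf2⟩
    · have hempty : {D : Multiset (Finset ℕ) | IsXChain l r C D} = ∅ := by
        ext D
        simp only [Set.mem_setOf_eq, Set.mem_empty_iff_false, iff_false]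
        intro hD
        exact her hD.2.2.1
      rw [hempty]
      simp
  · by_cases hr1 : r = 1
    · refine aux_single C p hcp _ (fun D hD => ?_)
      obtain ⟨h1, h2, -⟩ := hD
      exact ⟨h1, by rw [h2, hr1]⟩
    · have hr2 : 2 ≤ r := by omega
      by_cases hel : Even l
      · have hl0 : l % 2 = 0 := Nat.even_iff.mp hel
        refine aux_master C l p r hdc hcp hlc hl hr2 (fun _ => l / 2)
          (fun i => by omega) (fun i => by omega)
          (fun i hir => rfl) (by omega)
          _ (fun D hD => ?_)
        obtain ⟨h1, h2, hY⟩ := hD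
        rw [if_pos hel] at hY
        obtain ⟨f, hf1, hf2⟩ := hY
        exact ⟨h1, f, hf1, hf2⟩
      · have hempty : {D : Multiset (Finset ℕ) | IsYChain l r C D} = ∅ := by
          ext D
          simp only [Set.mem_setOf_eq, Set.mem_empty_iff_false, iff_false]
          intro hD
          obtain ⟨-, -, hY⟩ := hD
          rw [if_neg hel] at hY
          exact hr1 hY
        rw [hempty]
        simp
end

section
/- Let l ≥ 2 and p > q ≥ 2 be integers such that both pl and ql are even. Then there exists a map φ from the set of connected members of D_{l,q} to the set of connected members of D_{l,p} such that for every connected B ∈ D_{l,p} the preimage φ^{-1}(B) has at most p elements. -/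
section Aux
open Finset Relation
/-! ### auxiliary construction -/

lemma mem_msup {C : Multiset (Finset ℕ)} {a : ℕ} :
    a ∈ C.sup ↔ ∃ X ∈ C, a ∈ X := by
  induction C using Multiset.induction with
  | empty => simp
  | cons A s ih => simp [Multiset.sup_cons, Finset.mem_union, ih]

def wf (l : ℕ) : ℕ := if Even l then l / 2 else l - 1

def cf (l w : ℕ) : ℕ → ℕ
  | 0 => 0
  | i + 1 => cf l w i + (if i % 2 = 0 then w else l - w)

def Sf (h l w m : ℕ) (B B' : Finset ℕ) (i : ℕ) : Finset ℕ :=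
  if i = 0 then B
  else if i ≤ m then Finset.Ioc (h + cf l w (i - 1)) (h + cf l w i)
  else B'

def Nf (h l w m : ℕ) (B B' : Finset ℕ) (i : ℕ) : Finset ℕ :=
  Sf h l w m B B' i ∪ Sf h l w m B B' (i + 1)

noncomputable def pickMem (C : Multiset (Finset ℕ)) : Finset ℕ :=
  if h : C = 0 then ∅ else (Multiset.exists_mem_of_ne_zero h).choose

lemma pickMem_mem {C : Multiset (Finset ℕ)} (h : C ≠ 0) : pickMem C ∈ C := by
  rw [pickMem, dif_neg h]
  exact (Multiset.exists_mem_of_ne_zero h).choose_spec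

noncomputable def pickSub (A : Finset ℕ) (k : ℕ) : Finset ℕ :=
  (Finset.exists_subset_card_eq (min_le_right k A.card)).choose

lemma pickSub_subset (A : Finset ℕ) (k : ℕ) : pickSub A k ⊆ A :=
  (Finset.exists_subset_card_eq (min_le_right k A.card)).choose_spec.1

lemma pickSub_card (A : Finset ℕ) (k : ℕ) : (pickSub A k).card = min k A.card :=
  (Finset.exists_subset_card_eq (min_le_right k A.card)).choose_spec.2

noncomputable def buildC (l q p : ℕ) (C : Multiset (Finset ℕ)) : Multiset (Finset ℕ) :=
  C.erase (pickMem C) +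
    (Multiset.range (p - q + 1)).map
      (Nf (q * l / 2) l (wf l) (p - q) (pickSub (pickMem C) (l - wf l))
        (pickMem C \ pickSub (pickMem C) (l - wf l)))

section Chain

variable {l w m h H : ℕ} {B B' : Finset ℕ}

lemma cf_succ (l w i : ℕ) :
    cf l w (i + 1) = cf l w i + (if i % 2 = 0 then w else l - w) := rfl

lemma cf_lt (hw1 : 1 ≤ w) (hw2 : w < l) (i : ℕ) : cf l w i < cf l w (i + 1) := by
  rw [cf_succ]
  rcases Nat.even_or_odd i with he | ho
  · rw [if_pos (Nat.even_iff.mp he)]; omega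
  · have h1 : i % 2 = 1 := Nat.odd_iff.mp ho
    rw [if_neg (by omega)]; omega

lemma cf_mono (hw1 : 1 ≤ w) (hw2 : w < l) {i j : ℕ} (hij : i ≤ j) :
    cf l w i ≤ cf l w j := by
  induction j with
  | zero => rw [Nat.le_zero.mp hij]
  | succ j ih =>
    rcases Nat.lt_or_ge i (j + 1) with hlt | hge
    · exact le_trans (ih (by omega)) (cf_lt hw1 hw2 j).le
    · have : i = j + 1 := by omega
      subst this; rfl

lemma cf_even (hw2 : w ≤ l) (k : ℕ) : cf l w (2 * k) = k * l := by
  induction k with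
  | zero => simp [cf]
  | succ k ih =>
    have h1 : 2 * (k + 1) = (2 * k + 1) + 1 := by omega
    rw [h1, cf_succ, cf_succ, if_pos (by omega), if_neg (by omega), ih]
    have : (k + 1) * l = k * l + l := by ring
    omega

lemma cf_odd (hw2 : w ≤ l) (k : ℕ) : cf l w (2 * k + 1) = k * l + w := by
  rw [cf_succ, if_pos (by omega), cf_even hw2]

lemma Sf_mid {i : ℕ} (h1 : 1 ≤ i) (h2 : i ≤ m) {a : ℕ}
    (ha : a ∈ Sf h l w m B B' i) : h + cf l w (i - 1) < a ∧ a ≤ h + cf l w i := by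
  rw [Sf, if_neg (by omega), if_pos h2] at ha
  exact Finset.mem_Ioc.mp ha

lemma Sf_mid_gt {i : ℕ} (h1 : 1 ≤ i) (h2 : i ≤ m) {a : ℕ}
    (ha : a ∈ Sf h l w m B B' i) : h < a := by
  have := Sf_mid h1 h2 ha; omega

lemma Sf_mid_le (hw1 : 1 ≤ w) (hw2 : w < l) {i : ℕ} (h1 : 1 ≤ i) (h2 : i ≤ m) {a : ℕ}
    (ha : a ∈ Sf h l w m B B' i) : a ≤ h + cf l w m := by
  have h3 := Sf_mid h1 h2 ha
  have := cf_mono (l := l) (w := w) hw1 hw2 h2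
  omega

lemma Sf_mid_inj (hw1 : 1 ≤ w) (hw2 : w < l) {i j : ℕ}
    (hi1 : 1 ≤ i) (hi2 : i ≤ m) (hj1 : 1 ≤ j) (hj2 : j ≤ m)
    {a : ℕ} (hai : a ∈ Sf h l w m B B' i) (haj : a ∈ Sf h l w m B B' j) : i = j := by
  have h1 := Sf_mid hi1 hi2 hai
  have h2 := Sf_mid hj1 hj2 haj
  by_contra hne
  rcases Nat.lt_or_ge i j with hlt | hge
  · have := cf_mono (l := l) (w := w) hw1 hw2 (show i ≤ j - 1 by omega); omega
  · have := cf_mono (l := l) (w := w) hw1 hw2 (show j ≤ i - 1 by omega); omega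

lemma Sf_card (hw1 : 1 ≤ w) (hw2 : w < l) (hpar : m % 2 = 1 → 2 * w = l)
    (hBc : B.card = l - w) (hB'c : B'.card = w) {i : ℕ} (h2 : i ≤ m + 1) :
    (Sf h l w m B B' i).card = if i % 2 = 0 then l - w else w := by
  rcases Nat.eq_zero_or_pos i with rfl | hi
  · simpa [Sf] using hBc
  rcases Nat.lt_or_ge m i with hgt | hle
  · have hieq : i = m + 1 := by omega
    subst hieq
    rw [Sf, if_neg (by omega), if_neg (by omega)]
    rcases Nat.even_or_odd m with he | ho
    · have hm0 : m % 2 = 0 := Nat.even_iff.mp he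
      rw [if_neg (by omega)]; exact hB'c
    · have hm1 : m % 2 = 1 := Nat.odd_iff.mp ho
      have h2w := hpar hm1
      rw [if_pos (by omega), hB'c]; omega
  · rw [Sf, if_neg (by omega), if_pos hle, Nat.card_Ioc]
    have hstep : i - 1 + 1 = i := by omega
    have hcf : cf l w i = cf l w (i - 1) + (if (i - 1) % 2 = 0 then w else l - w) := by
      conv_lhs => rw [← hstep, cf_succ]
    rcases Nat.even_or_odd i with he | ho
    · have hi0 : i % 2 = 0 := Nat.even_iff.mp he
      rw [if_neg (by omega)] at hcf
      rw [if_pos hi0]; omega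
    · have hi1 : i % 2 = 1 := Nat.odd_iff.mp ho
      rw [if_pos (by omega)] at hcf
      rw [if_neg (by omega)]; omega

lemma Sf_subset (hw1 : 1 ≤ w) (hw2 : w < l)
    (hBs : B ⊆ Finset.Icc 1 h) (hB's : B' ⊆ Finset.Icc 1 h)
    {i : ℕ} (h2 : i ≤ m + 1) (hH : h + cf l w m ≤ H) (hhH : h ≤ H) :
    Sf h l w m B B' i ⊆ Finset.Icc 1 H := by
  intro a ha
  rcases Nat.eq_zero_or_pos i with rfl | hi
  · rw [Sf, if_pos rfl] at ha
    have := Finset.mem_Icc.mp (hBs ha); exact Finset.mem_Icc.mpr ⟨this.1, by omega⟩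
  rcases Nat.lt_or_ge m i with hgt | hle
  · rw [Sf, if_neg (by omega), if_neg (by omega)] at ha
    have := Finset.mem_Icc.mp (hB's ha); exact Finset.mem_Icc.mpr ⟨this.1, by omega⟩
  · have h3 := Sf_mid hi hle ha
    have h4 := Sf_mid_le hw1 hw2 hi hle ha
    exact Finset.mem_Icc.mpr ⟨by omega, by omega⟩

lemma Sf_disj (hw1 : 1 ≤ w) (hw2 : w < l) (hm : 1 ≤ m)
    (hBs : B ⊆ Finset.Icc 1 h) (hB's : B' ⊆ Finset.Icc 1 h)
    {i : ℕ} (h2 : i ≤ m) :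
    Disjoint (Sf h l w m B B' i) (Sf h l w m B B' (i + 1)) := by
  rw [Finset.disjoint_left]
  intro a ha ha'
  rcases Nat.eq_zero_or_pos i with rfl | hi
  · have hgt : h < a := Sf_mid_gt (by omega) (by omega) ha'
    rw [Sf, if_pos rfl] at ha
    have := Finset.mem_Icc.mp (hBs ha); omega
  rcases Nat.lt_or_ge i m with hlt | hge
  · have hgt : h < a := Sf_mid_gt (by omega) (by omega) ha'
    exact absurd (Sf_mid_inj hw1 hw2 hi (by omega) (by omega) (by omega) ha ha') (by omega)
  · have hieq : i = m := by omega
    subst hieq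
    have hgt : h < a := Sf_mid_gt (by omega) (by omega) ha
    rw [Sf, if_neg (by omega), if_neg (by omega)] at ha'
    have := Finset.mem_Icc.mp (hB's ha'); omega

lemma Nf_card (hw1 : 1 ≤ w) (hw2 : w < l) (hm : 1 ≤ m) (hpar : m % 2 = 1 → 2 * w = l)
    (hBc : B.card = l - w) (hB'c : B'.card = w)
    (hBs : B ⊆ Finset.Icc 1 h) (hB's : B' ⊆ Finset.Icc 1 h)
    {i : ℕ} (h2 : i ≤ m) : (Nf h l w m B B' i).card = l := by
  rw [Nf, Finset.card_union_of_disjoint (Sf_disj hw1 hw2 hm hBs hB's h2),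
    Sf_card hw1 hw2 hpar hBc hB'c (by omega), Sf_card hw1 hw2 hpar hBc hB'c (by omega)]
  have : i % 2 = 0 ∨ i % 2 = 1 := by omega
  rcases this with h | h
  · rw [if_pos h, if_neg (by omega)]; omega
  · rw [if_neg (by omega), if_pos (by omega)]; omega

lemma Sf_mid_nonempty (hw1 : 1 ≤ w) (hw2 : w < l) {i : ℕ} (h1 : 1 ≤ i) (h2 : i ≤ m) :
    (Sf h l w m B B' i).Nonempty := by
  rw [Sf, if_neg (by omega), if_pos h2]
  refine ⟨h + cf l w i, Finset.mem_Ioc.mpr ⟨?_, le_rfl⟩⟩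
  have h3 : i - 1 + 1 = i := by omega
  have hlt := cf_lt (l := l) (w := w) hw1 hw2 (i - 1)
  rw [h3] at hlt
  omega

lemma Sf_le_h (hBs : B ⊆ Finset.Icc 1 h) (hB's : B' ⊆ Finset.Icc 1 h)
    {i a : ℕ} (hi : i = 0 ∨ i = m + 1) (ha : a ∈ Sf h l w m B B' i) :
    a ∈ B ∪ B' ∧ a ≤ h := by
  rcases hi with rfl | rfl
  · rw [Sf, if_pos rfl] at ha
    exact ⟨Finset.mem_union_left _ ha, (Finset.mem_Icc.mp (hBs ha)).2⟩
  · rw [Sf, if_neg (by omega), if_neg (by omega)] at ha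
    exact ⟨Finset.mem_union_right _ ha, (Finset.mem_Icc.mp (hB's ha)).2⟩

end Chain

lemma countP_pair (u v : ℕ) (huv : u ≠ v) (s : Multiset ℕ) :
    Multiset.countP (fun i => i = u ∨ i = v) s = s.count u + s.count v := by
  induction s using Multiset.induction with
  | empty => simp
  | cons a s ih =>
    rw [Multiset.countP_cons, ih, Multiset.count_cons, Multiset.count_cons]
    split_ifs <;> omega

lemma countP_single (u : ℕ) (s : Multiset ℕ) :
    Multiset.countP (fun i => i = u) s = s.count u := by
  induction s using Multiset.induction with
  | empty => simp
  | cons a s ih =>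
    rw [Multiset.countP_cons, ih, Multiset.count_cons]
    split_ifs <;> omega

noncomputable def recoverC (l q : ℕ) (D : Multiset (Finset ℕ)) : Multiset (Finset ℕ) :=
  D.filter (fun X => X ⊆ Finset.Icc 1 (q * l / 2)) +
    {(D.filter (fun X => ¬ X ⊆ Finset.Icc 1 (q * l / 2))).sup ∩ Finset.Icc 1 (q * l / 2)}

lemma build_main (l p q : ℕ) (hl : 2 ≤ l) (hq : 2 ≤ q) (hqp : q < p)
    (hpl : Even (p * l)) (hql : Even (q * l)) (C : Multiset (Finset ℕ))
    (hC : C ∈ Dfull l q) (hconn : ConnectedColl C) :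
    buildC l q p C ∈ Dfull l p ∧ ConnectedColl (buildC l q p C) ∧
      recoverC l q (buildC l q p C) = C := by
  obtain ⟨hcard, hdc, hsub, hsize⟩ := hC
  set h : ℕ := q * l / 2 with hh
  set H : ℕ := p * l / 2 with hH
  set m : ℕ := p - q with hm'
  set w : ℕ := wf l with hw'
  have hm : 1 ≤ m := by omega
  have hCne : C ≠ 0 := by
    intro h0; rw [h0] at hcard; simp at hcard; omega
  set A₁ : Finset ℕ := pickMem C with hA₁'
  have hA₁ : A₁ ∈ C := pickMem_mem hCne
  have hA₁card : A₁.card = l := hsize _ hA₁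
  have hA₁sub : A₁ ⊆ Finset.Icc 1 h := hsub _ hA₁
  have hw1 : 1 ≤ w := by
    rw [hw', wf]; split <;> rename_i he
    · obtain ⟨k, hk⟩ := he; omega
    · omega
  have hw2 : w < l := by
    rw [hw', wf]; split <;> rename_i he
    · obtain ⟨k, hk⟩ := he; omega
    · omega
  have hml : Even (m * l) := by
    have h1 : m * l = p * l - q * l := by rw [hm', Nat.sub_mul]
    obtain ⟨u, hu⟩ := hpl
    obtain ⟨v, hv⟩ := hql
    have h2 : q * l ≤ p * l := Nat.mul_le_mul_right l (by omega)
    exact ⟨u - v, by omega⟩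
  have hpar : m % 2 = 1 → 2 * w = l := by
    intro hm1
    have hle : Even l := by
      rcases Nat.even_mul.mp hml with he | he
      · exact absurd (Nat.even_iff.mp he) (by omega)
      · exact he
    rw [hw', wf, if_pos hle]
    obtain ⟨k, hk⟩ := hle; omega
  set B : Finset ℕ := pickSub A₁ (l - w) with hB'def
  set B' : Finset ℕ := A₁ \ B with hB''
  have hBsub : B ⊆ A₁ := pickSub_subset _ _
  have hBc : B.card = l - w := by
    rw [hB'def, pickSub_card, hA₁card]; omega
  have hB'c : B'.card = w := by
    rw [hB'', Finset.card_sdiff_of_subset hBsub, hA₁card, hBc]; omega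
  have hBs : B ⊆ Finset.Icc 1 h := fun a ha => hA₁sub (hBsub ha)
  have hB's : B' ⊆ Finset.Icc 1 h := fun a ha => hA₁sub (Finset.sdiff_subset ha)
  have hBB' : B ∪ B' = A₁ := Finset.union_sdiff_of_subset hBsub
  have hcfm : h + cf l w m = H := by
    rcases Nat.even_or_odd m with he | ho
    · obtain ⟨k, hk⟩ := he
      have h1 : cf l w m = k * l := by rw [hk, ← two_mul, cf_even (by omega)]
      obtain ⟨u, hu⟩ := hpl
      obtain ⟨v, hv⟩ := hql
      have h2 : q * l ≤ p * l := Nat.mul_le_mul_right l (by omega)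
      have h3 : m * l = p * l - q * l := by rw [hm', Nat.sub_mul]
      have h4 : m * l = 2 * (k * l) := by rw [hk]; ring
      omega
    · have hm1 : m % 2 = 1 := Nat.odd_iff.mp ho
      have h2w := hpar hm1
      obtain ⟨k, hk⟩ := ho
      have h1 : cf l w m = k * l + w := by rw [hk, cf_odd (by omega)]
      obtain ⟨u, hu⟩ := hpl
      obtain ⟨v, hv⟩ := hql
      have h2 : q * l ≤ p * l := Nat.mul_le_mul_right l (by omega)
      have h3 : m * l = p * l - q * l := by rw [hm', Nat.sub_mul]
      have h4 : m * l = 2 * (k * l) + l := by rw [hk]; ring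
      omega
  have hhH : h ≤ H := by omega
  -- the new collection
  set N : ℕ → Finset ℕ := Nf h l w m B B' with hN'
  have hDdef : buildC l q p C = C.erase A₁ + (Multiset.range (m + 1)).map N := rfl
  set D : Multiset (Finset ℕ) := C.erase A₁ + (Multiset.range (m + 1)).map N with hD'
  -- basic membership facts
  have hA₁ne : A₁.Nonempty := Finset.card_pos.mp (by omega)
  have hEC : ∀ X ∈ C.erase A₁, X ∈ C :=
    fun X hX => Multiset.mem_of_le (Multiset.erase_le _ _) hX
  have hEmem : ∀ X ∈ C.erase A₁, X ∈ D :=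
    fun X hX => Multiset.mem_add.mpr (Or.inl hX)
  have hNmem : ∀ i ≤ m, N i ∈ D := fun i hi =>
    Multiset.mem_add.mpr (Or.inr (Multiset.mem_map.mpr
      ⟨i, Multiset.mem_range.mpr (by omega), rfl⟩))
  have hDcases : ∀ X ∈ D, X ∈ C.erase A₁ ∨ ∃ i ≤ m, X = N i := by
    intro X hX
    rcases Multiset.mem_add.mp hX with h1 | h1
    · exact Or.inl h1
    · obtain ⟨i, hir, hNi⟩ := Multiset.mem_map.mp h1
      exact Or.inr ⟨i, by have := Multiset.mem_range.mp hir; omega, hNi.symm⟩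
  have hSfB : Sf h l w m B B' 0 = B := by rw [Sf, if_pos rfl]
  have hSfB' : Sf h l w m B B' (m + 1) = B' := by
    rw [Sf, if_neg (by omega), if_neg (by omega)]
  have hNle : ∀ i ≤ m, ∀ a ∈ N i, a ≤ h →
      a ∈ A₁ ∧ ((i = 0 ∧ a ∈ B) ∨ (i = m ∧ a ∈ B')) := by
    intro i hi a ha hale
    rcases Finset.mem_union.mp ha with hs | hs
    · rcases Nat.eq_zero_or_pos i with rfl | hipos
      · rw [hSfB] at hs
        exact ⟨hBsub hs, Or.inl ⟨rfl, hs⟩⟩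
      · exact absurd (Sf_mid_gt hipos hi hs) (by omega)
    · rcases Nat.lt_or_ge i m with hlt | hge
      · exact absurd (Sf_mid_gt (by omega) (by omega) hs) (by omega)
      · have hieq : i = m := by omega
        subst hieq
        rw [hSfB'] at hs
        exact ⟨Finset.sdiff_subset hs, Or.inr ⟨rfl, hs⟩⟩
  have hNgt : ∀ i ≤ m, ∀ a ∈ N i, h < a →
      ∃ j, 1 ≤ j ∧ j ≤ m ∧ a ∈ Sf h l w m B B' j ∧ (i = j ∨ i + 1 = j) := by
    intro i hi a ha hagt
    rcases Finset.mem_union.mp ha with hs | hs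
    · rcases Nat.eq_zero_or_pos i with rfl | hipos
      · rw [hSfB] at hs
        exact absurd (Finset.mem_Icc.mp (hBs hs)).2 (by omega)
      · exact ⟨i, hipos, hi, hs, Or.inl rfl⟩
    · rcases Nat.lt_or_ge i m with hlt | hge
      · exact ⟨i + 1, by omega, by omega, hs, Or.inr rfl⟩
      · have hieq : i = m := by omega
        subst hieq
        rw [hSfB'] at hs
        exact absurd (Finset.mem_Icc.mp (hB's hs)).2 (by omega)
  have hHcf : h + cf l w m ≤ H := by omega
  refine ⟨⟨?_, ?_, ?_, ?_⟩, ?_, ?_⟩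
  · -- cardinality
    rw [hDdef, Multiset.card_add, Multiset.card_map, Multiset.card_range,
      Multiset.card_erase_of_mem hA₁, hcard, Nat.pred_eq_sub_one]
    omega
  · -- double cover
    rw [hDdef]
    intro a ha
    obtain ⟨X, hX, haX⟩ := mem_msup.mp ha
    rw [Multiset.countP_add, Multiset.countP_map]
    rcases Nat.lt_or_ge h a with hgt | hle
    · -- new point
      have hXnew : ∃ i ≤ m, X = N i := by
        rcases hDcases X hX with hold | hnew
        · exact absurd (Finset.mem_Icc.mp (hsub X (hEC X hold) haX)).2 (by omega)
        · exact hnew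
      obtain ⟨i, hi, rfl⟩ := hXnew
      obtain ⟨j, hj1, hj2, haj, -⟩ := hNgt i hi a haX hgt
      have hcount0 : Multiset.countP (fun A => a ∈ A) (C.erase A₁) = 0 :=
        Multiset.countP_eq_zero.mpr (fun Y hY haY =>
          absurd (Finset.mem_Icc.mp (hsub Y (hEC Y hY) haY)).2 (by omega))
      have hfc : (Multiset.filter (fun i => a ∈ N i) (Multiset.range (m + 1))).card = 2 := by
        have hfe : Multiset.filter (fun i => a ∈ N i) (Multiset.range (m + 1)) =
            Multiset.filter (fun i => i = j - 1 ∨ i = j) (Multiset.range (m + 1)) := by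
          apply Multiset.filter_congr
          intro i hi'
          have hile : i ≤ m := by have := Multiset.mem_range.mp hi'; omega
          constructor
          · intro hani
            obtain ⟨j', hj'1, hj'2, haj', hij'⟩ := hNgt i hile a hani hgt
            have : j' = j := Sf_mid_inj hw1 hw2 hj'1 hj'2 hj1 hj2 haj' haj
            omega
          · rintro (rfl | rfl)
            · have hjj : j - 1 + 1 = j := by omega
              exact Finset.mem_union_right _ (hjj ▸ haj)
            · exact Finset.mem_union_left _ haj
        rw [hfe, ← Multiset.countP_eq_card_filter, countP_pair (j - 1) j (by omega),
          Multiset.count_eq_one_of_mem (Multiset.nodup_range _)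
            (Multiset.mem_range.mpr (by omega)),
          Multiset.count_eq_one_of_mem (Multiset.nodup_range _)
            (Multiset.mem_range.mpr (by omega))]
      rw [hcount0, hfc]
    · -- old point
      have haC : a ∈ unionC C := by
        rcases hDcases X hX with hold | ⟨i, hi, rfl⟩
        · exact mem_msup.mpr ⟨X, hEC X hold, haX⟩
        · exact mem_msup.mpr ⟨A₁, hA₁, (hNle i hi a haX hle).1⟩
      have hc2 := hdc a haC
      have hsplit : Multiset.countP (fun A => a ∈ A) C =
          Multiset.countP (fun A => a ∈ A) (C.erase A₁) + if a ∈ A₁ then 1 else 0 := by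
        conv_lhs => rw [← Multiset.cons_erase hA₁]
        rw [Multiset.countP_cons]
      by_cases haB : a ∈ B
      · have haA₁ : a ∈ A₁ := hBsub haB
        have hfc : (Multiset.filter (fun i => a ∈ N i) (Multiset.range (m + 1))).card = 1 := by
          have hfe : Multiset.filter (fun i => a ∈ N i) (Multiset.range (m + 1)) =
              Multiset.filter (fun i => i = 0) (Multiset.range (m + 1)) := by
            apply Multiset.filter_congr
            intro i hi'
            have hile : i ≤ m := by have := Multiset.mem_range.mp hi'; omega
            constructor
            · intro hani
              rcases (hNle i hile a hani hle).2 with ⟨h1, _⟩ | ⟨_, h2⟩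
              · exact h1
              · exact absurd h2 (by rw [hB'']; simp [haB])
            · rintro rfl
              exact Finset.mem_union_left _ (hSfB ▸ haB)
          rw [hfe, ← Multiset.countP_eq_card_filter, countP_single 0,
            Multiset.count_eq_one_of_mem (Multiset.nodup_range _)
              (Multiset.mem_range.mpr (by omega))]
        rw [hsplit, if_pos haA₁] at hc2
        rw [hfc]; omega
      · by_cases haB' : a ∈ B'
        · have haA₁ : a ∈ A₁ := Finset.sdiff_subset haB'
          have hfc : (Multiset.filter (fun i => a ∈ N i) (Multiset.range (m + 1))).card = 1 := by
            have hfe : Multiset.filter (fun i => a ∈ N i) (Multiset.range (m + 1)) =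
                Multiset.filter (fun i => i = m) (Multiset.range (m + 1)) := by
              apply Multiset.filter_congr
              intro i hi'
              have hile : i ≤ m := by have := Multiset.mem_range.mp hi'; omega
              constructor
              · intro hani
                rcases (hNle i hile a hani hle).2 with ⟨_, h1⟩ | ⟨h2, _⟩
                · exact absurd h1 haB
                · exact h2
              · rintro rfl
                exact Finset.mem_union_right _ (by rw [hSfB']; exact haB')
            rw [hfe, ← Multiset.countP_eq_card_filter, countP_single m,
              Multiset.count_eq_one_of_mem (Multiset.nodup_range _)
                (Multiset.mem_range.mpr (by omega))]
          rw [hsplit, if_pos haA₁] at hc2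
          rw [hfc]; omega
        · have haA₁ : a ∉ A₁ := by
            intro hmem
            rcases Finset.mem_union.mp (hBB' ▸ hmem) with h1 | h1
            · exact haB h1
            · exact haB' h1
          have hfc : (Multiset.filter (fun i => a ∈ N i) (Multiset.range (m + 1))).card = 0 := by
            rw [← Multiset.countP_eq_card_filter]
            apply Multiset.countP_eq_zero.mpr
            intro i hi' hani
            have hile : i ≤ m := by have := Multiset.mem_range.mp hi'; omega
            exact haA₁ (hNle i hile a hani hle).1
          rw [hsplit, if_neg haA₁] at hc2
          rw [hfc]; omega
  · -- subsets
    rw [hDdef]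
    intro X hX
    rcases hDcases X hX with hold | ⟨i, hi, rfl⟩
    · exact fun a ha => Finset.Icc_subset_Icc_right hhH (hsub X (hEC X hold) ha)
    · exact Finset.union_subset
        (Sf_subset hw1 hw2 hBs hB's (by omega) hHcf hhH)
        (Sf_subset hw1 hw2 hBs hB's (by omega) hHcf hhH)
  · -- sizes
    rw [hDdef]
    intro X hX
    rcases hDcases X hX with hold | ⟨i, hi, rfl⟩
    · exact hsize X (hEC X hold)
    · exact Nf_card hw1 hw2 hm hpar hBc hB'c hBs hB's hi
  · -- connectivity
    rw [hDdef]
    set rel : Finset ℕ → Finset ℕ → Prop :=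
      fun X Y => X ∈ D ∧ Y ∈ D ∧ (X ∩ Y).Nonempty with hrel
    have hsymm : Symmetric rel := fun X Y ⟨h1, h2, h3⟩ =>
      ⟨h2, h1, by rwa [Finset.inter_comm]⟩
    have hsymm' : Symmetric (Relation.ReflTransGen rel) :=
      by haveI : Std.Symm rel := ⟨fun a b h => hsymm h⟩; exact fun X Y h => Std.Symm.symm X Y h
    have hchain : ∀ i ≤ m, Relation.ReflTransGen rel (N 0) (N i) := by
      intro i
      induction i with
      | zero => exact fun _ => .refl
      | succ i ih =>
        intro hi
        refine (ih (by omega)).tail ?_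
        obtain ⟨x, hx⟩ := Sf_mid_nonempty (m := m) (h := h) (B := B) (B' := B')
          hw1 hw2 (show 1 ≤ i + 1 by omega) hi
        exact ⟨hNmem i (by omega), hNmem (i + 1) hi,
          ⟨x, Finset.mem_inter.mpr
            ⟨Finset.mem_union_right _ hx, Finset.mem_union_left _ hx⟩⟩⟩
    have htouch : ∀ X ∈ D, (X ∩ A₁).Nonempty → Relation.ReflTransGen rel X (N 0) := by
      rintro X hX ⟨x, hx⟩
      have hx1 := (Finset.mem_inter.mp hx).1
      have hx2 := (Finset.mem_inter.mp hx).2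
      rw [← hBB'] at hx2
      rcases Finset.mem_union.mp hx2 with hxB | hxB
      · exact .single ⟨hX, hNmem 0 (by omega),
          ⟨x, Finset.mem_inter.mpr ⟨hx1, Finset.mem_union_left _ (hSfB ▸ hxB)⟩⟩⟩
      · have h1 : Relation.ReflTransGen rel X (N m) := .single ⟨hX, hNmem m le_rfl,
          ⟨x, Finset.mem_inter.mpr ⟨hx1, Finset.mem_union_right _ (by rw [hSfB']; exact hxB)⟩⟩⟩
        exact h1.trans (hsymm' (hchain m le_rfl))
    have hto0 : ∀ X ∈ D, Relation.ReflTransGen rel X (N 0) := by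
      intro X hX
      rcases hDcases X hX with hold | ⟨i, hi, rfl⟩
      · by_cases hXA : X = A₁
        · obtain ⟨x₀, hx₀⟩ := hA₁ne
          exact htouch X hX ⟨x₀, Finset.mem_inter.mpr ⟨by rw [hXA]; exact hx₀, hx₀⟩⟩
        · have key : ∀ Y, Relation.ReflTransGen
              (fun U V => U ∈ C ∧ V ∈ C ∧ (U ∩ V).Nonempty) X Y →
              Relation.ReflTransGen rel (if X = A₁ then N 0 else X)
                (if Y = A₁ then N 0 else Y) := by
            intro Y hXY
            induction hXY with
            | refl => exact .refl
            | @tail Z Y' _ hstep ih =>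
              obtain ⟨hZC, hY'C, hint⟩ := hstep
              refine ih.trans ?_
              by_cases hZA : Z = A₁
              · by_cases hYA : Y' = A₁
                · rw [if_pos hZA, if_pos hYA]
                · rw [if_pos hZA, if_neg hYA]
                  have hY'D : Y' ∈ D :=
                    hEmem Y' ((Multiset.mem_erase_of_ne hYA).mpr hY'C)
                  refine hsymm' (htouch Y' hY'D ?_)
                  rw [← hZA, Finset.inter_comm]
                  exact hint
              · by_cases hYA : Y' = A₁
                · rw [if_neg hZA, if_pos hYA]
                  have hZD : Z ∈ D :=
                    hEmem Z ((Multiset.mem_erase_of_ne hZA).mpr hZC)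
                  exact htouch Z hZD (hYA ▸ hint)
                · rw [if_neg hZA, if_neg hYA]
                  exact .single ⟨hEmem Z ((Multiset.mem_erase_of_ne hZA).mpr hZC),
                    hEmem Y' ((Multiset.mem_erase_of_ne hYA).mpr hY'C), hint⟩
          have hkey := key A₁ (hconn X (hEC X hold) A₁ hA₁)
          rwa [if_neg hXA, if_pos rfl] at hkey
      · exact hsymm' (hchain i hi)
    intro X hX Y hY
    exact (hto0 X hX).trans (hsymm' (hto0 Y hY))
  · -- recovery
    rw [hDdef]
    show Multiset.filter (fun X => X ⊆ Finset.Icc 1 h) D +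
      {(Multiset.filter (fun X => ¬ X ⊆ Finset.Icc 1 h) D).sup ∩ Finset.Icc 1 h} = C
    have hNnot : ∀ i ≤ m, ¬ N i ⊆ Finset.Icc 1 h := by
      intro i hi hcon
      rcases Nat.eq_zero_or_pos i with rfl | hipos
      · obtain ⟨x, hx⟩ := Sf_mid_nonempty (m := m) (h := h) (B := B) (B' := B')
          hw1 hw2 le_rfl hm
        have := (Finset.mem_Icc.mp (hcon (Finset.mem_union_right _ hx))).2
        exact absurd (Sf_mid_gt le_rfl hm hx) (by omega)
      · obtain ⟨x, hx⟩ := Sf_mid_nonempty (m := m) (h := h) (B := B) (B' := B')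
          hw1 hw2 hipos hi
        have := (Finset.mem_Icc.mp (hcon (Finset.mem_union_left _ hx))).2
        exact absurd (Sf_mid_gt hipos hi hx) (by omega)
    have hfilt1 : Multiset.filter (fun X => X ⊆ Finset.Icc 1 h) D = C.erase A₁ := by
      rw [hD', Multiset.filter_add,
        Multiset.filter_eq_self.mpr (fun X hX => hsub X (hEC X hX)),
        Multiset.filter_eq_nil.mpr ?_, add_zero]
      intro X hX
      obtain ⟨i, hir, rfl⟩ := Multiset.mem_map.mp hX
      exact hNnot i (by have := Multiset.mem_range.mp hir; omega)
    have hfilt2 : Multiset.filter (fun X => ¬ X ⊆ Finset.Icc 1 h) D =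
        (Multiset.range (m + 1)).map N := by
      rw [hD', Multiset.filter_add,
        Multiset.filter_eq_nil.mpr (fun X hX hcon => hcon (hsub X (hEC X hX))),
        Multiset.filter_eq_self.mpr ?_, zero_add]
      intro X hX
      obtain ⟨i, hir, rfl⟩ := Multiset.mem_map.mp hX
      exact hNnot i (by have := Multiset.mem_range.mp hir; omega)
    have hsup : ((Multiset.range (m + 1)).map N).sup ∩ Finset.Icc 1 h = A₁ := by
      ext a
      rw [Finset.mem_inter]
      constructor
      · rintro ⟨hs, hIcc⟩
        obtain ⟨X, hX, haX⟩ := mem_msup.mp hs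
        obtain ⟨i, hir, rfl⟩ := Multiset.mem_map.mp hX
        exact (hNle i (by have := Multiset.mem_range.mp hir; omega) a haX
          (Finset.mem_Icc.mp hIcc).2).1
      · intro haA
        refine ⟨mem_msup.mpr ?_, hA₁sub haA⟩
        rcases Finset.mem_union.mp (hBB' ▸ haA) with hxB | hxB
        · exact ⟨N 0, Multiset.mem_map.mpr ⟨0, Multiset.mem_range.mpr (by omega), rfl⟩,
            Finset.mem_union_left _ (hSfB ▸ hxB)⟩
        · exact ⟨N m, Multiset.mem_map.mpr ⟨m, Multiset.mem_range.mpr (by omega), rfl⟩,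
            Finset.mem_union_right _ (by rw [hSfB']; exact hxB)⟩
    rw [hfilt1, hfilt2, hsup, add_comm (C.erase A₁) _, Multiset.singleton_add,
      Multiset.cons_erase hA₁]


end Aux

/-- for `p > q ≥ 2` with `pl`, `ql` even there is a map `φ` from
connected members of `D_{l,q}` to connected members of `D_{l,p}` all of whose
fibers have at most `p` elements. -/
theorem stmt10 (l p q : ℕ) (hl : 2 ≤ l) (hq : 2 ≤ q) (hqp : q < p)
    (hpl : Even (p * l)) (hql : Even (q * l)) :
    ∃ φ : Multiset (Finset ℕ) → Multiset (Finset ℕ),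
      (∀ C ∈ Dfull l q, ConnectedColl C → φ C ∈ Dfull l p ∧ ConnectedColl (φ C)) ∧
      ∀ B ∈ Dfull l p, ConnectedColl B →
        Nat.card {C : Multiset (Finset ℕ) |
          C ∈ Dfull l q ∧ ConnectedColl C ∧ φ C = B} ≤ p := by
  classical
  refine ⟨fun C => if C ∈ Dfull l q ∧ ConnectedColl C then buildC l q p C else C, ?_, ?_⟩
  · intro C hC hconn
    simp only [if_pos (show C ∈ Dfull l q ∧ ConnectedColl C from ⟨hC, hconn⟩)]
    obtain ⟨h1, h2, -⟩ := build_main l p q hl hq hqp hpl hql C hC hconn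
    exact ⟨h1, h2⟩
  · intro B hB hBconn
    have hsub : {C : Multiset (Finset ℕ) | C ∈ Dfull l q ∧ ConnectedColl C ∧
        (if C ∈ Dfull l q ∧ ConnectedColl C then buildC l q p C else C) = B}.Subsingleton := by
      intro C₁ h₁ C₂ h₂
      obtain ⟨hC₁, hc₁, he₁⟩ := h₁
      obtain ⟨hC₂, hc₂, he₂⟩ := h₂
      rw [if_pos ⟨hC₁, hc₁⟩] at he₁
      rw [if_pos ⟨hC₂, hc₂⟩] at he₂
      have r₁ := (build_main l p q hl hq hqp hpl hql C₁ hC₁ hc₁).2.2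
      have r₂ := (build_main l p q hl hq hqp hpl hql C₂ hC₂ hc₂).2.2
      rw [← r₁, ← r₂, he₁, he₂]
    have hss : Subsingleton ↥{C : Multiset (Finset ℕ) | C ∈ Dfull l q ∧ ConnectedColl C ∧
        (if C ∈ Dfull l q ∧ ConnectedColl C then buildC l q p C else C) = B} :=
      (Set.subsingleton_coe _).mpr hsub
    have h1 : Nat.card {C : Multiset (Finset ℕ) | C ∈ Dfull l q ∧ ConnectedColl C ∧
        (if C ∈ Dfull l q ∧ ConnectedColl C then buildC l q p C else C) = B} ≤ 1 := by
      rcases isEmpty_or_nonempty ↥{C : Multiset (Finset ℕ) | C ∈ Dfull l q ∧ ConnectedColl C ∧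
        (if C ∈ Dfull l q ∧ ConnectedColl C then buildC l q p C else C) = B} with he | hne
      · simp only [Nat.card_of_isEmpty]; omega
      · rw [Nat.card_unique]
    exact le_trans h1 (by omega)
end
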